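/- arXiv:1612.01967 — 6 statements merged into one kernel-verified Lean document; each statement's English description precedes it below -/
import Mathlib

section
/- For every positive integer n, the total number of subgroups of the dicyclic group Dic_{4n} equals τ(2n) + σ(n). -/
namespace DicyclicCount

open AddSubgroup QuaternionGroup



variable {m : ℕ} [NeZero m]

theorem natCast_val_self (x : ZMod m) : ((x.val : ℕ) : ZMod m) = x :=
  ZMod.natCast_rightInverse x

theorem mem_zmultiples_natCast_iff {d : ℕ} (hd : d ∣ m) (x : ZMod m) :
    x ∈ zmultiples (d : ZMod m) ↔ d ∣ x.val := by
  constructor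
  · rintro ⟨k, rfl⟩
    have h1 : ((k * d : ℤ) : ZMod m) = ((k • (d : ZMod m) : ZMod m)) := by
      push_cast; rw [zsmul_eq_mul]
    have h2 : (((k • (d : ZMod m)).val : ℤ) : ZMod m) = ((k * d : ℤ) : ZMod m) := by
      rw [h1]; push_cast [natCast_val_self]; ring
    rw [ZMod.intCast_eq_intCast_iff'] at h2
    have h3 : (m : ℤ) ∣ ((k • (d : ZMod m)).val : ℤ) - k * d := Int.ModEq.dvd h2.symm
    have h5 : (d : ℤ) ∣ ((k • (d : ZMod m)).val : ℤ) - k * d :=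
      ((Int.natCast_dvd_natCast.mpr hd).trans h3)
    have h6 : (d : ℤ) ∣ k * d := Dvd.dvd.mul_left dvd_rfl k
    have h4 : (d : ℤ) ∣ ((k • (d : ZMod m)).val : ℤ) := by
      have := dvd_add h5 h6; rwa [sub_add_cancel] at this
    exact_mod_cast h4
  · intro h
    obtain ⟨k, hk⟩ := h
    refine ⟨(k : ℤ), ?_⟩
    rw [← natCast_val_self x, hk]
    show (k : ℤ) • (d : ZMod m) = _
    rw [zsmul_eq_mul]
    push_cast
    ring

theorem zmultiples_gcd (g : ZMod m) :
    zmultiples g = zmultiples ((Nat.gcd g.val m : ℕ) : ZMod m) := by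
  set d := Nat.gcd g.val m with hd
  have hdm : d ∣ m := Nat.gcd_dvd_right _ _
  apply le_antisymm
  · rw [zmultiples_le]
    rw [mem_zmultiples_natCast_iff hdm]
    exact Nat.gcd_dvd_left _ _
  · rw [zmultiples_le]
    -- (d : ZMod m) ∈ zmultiples g via Bezout
    refine ⟨Nat.gcdA g.val m, ?_⟩
    show _ • g = _
    rw [zsmul_eq_mul]
    have key : ((d : ℤ) : ZMod m) = ((g.val * Nat.gcdA g.val m + m * Nat.gcdB g.val m : ℤ) : ZMod m) := by
      rw [← Nat.gcd_eq_gcd_ab]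
    push_cast at key ⊢
    rw [key, natCast_val_self]
    simp [ZMod.natCast_self]
    ring

theorem exists_eq_zmultiples (S : AddSubgroup (ZMod m)) :
    ∃ d : ℕ, d ∣ m ∧ 0 < d ∧ S = zmultiples ((d : ℕ) : ZMod m) := by
  obtain ⟨⟨g, hgS⟩, hg⟩ := IsAddCyclic.exists_generator (α := S)
  have hS : S = zmultiples g := by
    apply le_antisymm
    · intro x hx
      obtain ⟨k, hk⟩ := hg ⟨x, hx⟩
      exact ⟨k, congrArg Subtype.val hk⟩
    · rw [zmultiples_le]; exact hgS
  refine ⟨Nat.gcd g.val m, Nat.gcd_dvd_right _ _, ?_, by rw [hS, zmultiples_gcd]⟩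
  exact Nat.gcd_pos_of_pos_right _ (Nat.pos_of_ne_zero (NeZero.ne m))

theorem index_zmultiples_natCast {d : ℕ} (hd : d ∣ m) :
    (zmultiples ((d : ℕ) : ZMod m)).index = d := by
  have hm : 0 < m := Nat.pos_of_ne_zero (NeZero.ne m)
  have hcard : Nat.card (zmultiples ((d : ℕ) : ZMod m)) = m / d := by
    rw [Nat.card_zmultiples, ZMod.addOrderOf_coe d (NeZero.ne m), Nat.gcd_eq_right hd]
  have := AddSubgroup.index_mul_card (zmultiples ((d : ℕ) : ZMod m))
  rw [hcard, Nat.card_zmod] at this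
  rcases Nat.eq_zero_or_pos d with rfl | hd0
  · simp at hd; omega
  · have hmd : 0 < m / d := Nat.div_pos (Nat.le_of_dvd hm hd) hd0
    have h2 : d * (m / d) = m := Nat.mul_div_cancel' hd
    nlinarith [this, h2]

theorem zmultiples_natCast_injOn {d e : ℕ} (hd : d ∣ m) (he : e ∣ m)
    (h : zmultiples ((d : ℕ) : ZMod m) = zmultiples ((e : ℕ) : ZMod m)) : d = e := by
  have := index_zmultiples_natCast (m := m) hd
  rw [h, index_zmultiples_natCast he] at this
  omega

theorem mem_zmultiples_natCast_self_div {d k : ℕ} (hd : d ∣ m) (hk : d ∣ k) :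
    ((k : ℕ) : ZMod m) ∈ zmultiples ((d : ℕ) : ZMod m) := by
  obtain ⟨c, rfl⟩ := hk
  exact ⟨(c : ℤ), by show _ • _ = _; rw [zsmul_eq_mul]; push_cast; ring⟩


variable {n : ℕ}

theorem xa_sq' (i : ZMod (2*n)) : (xa i : QuaternionGroup n) * xa i = a n := by
  rw [xa_mul_xa]; congr 1; ring

theorem inv_a' (i : ZMod (2*n)) : (a i : QuaternionGroup n)⁻¹ = a (-i) := rfl

theorem inv_xa' (i : ZMod (2*n)) : (xa i : QuaternionGroup n)⁻¹ = xa ((n : ZMod (2*n)) + i) := rfl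

/-- the `a`-part of a subgroup of the quaternion group, as an additive subgroup of `ZMod (2n)`. -/
def aPart (H : Subgroup (QuaternionGroup n)) : AddSubgroup (ZMod (2*n)) where
  carrier := {i | a i ∈ H}
  zero_mem' := H.one_mem
  add_mem' := fun hi hj => by
    have := H.mul_mem hi hj
    rwa [a_mul_a] at this
  neg_mem' := fun hi => by
    have := H.inv_mem hi
    rwa [inv_a'] at this

@[simp] theorem mem_aPart {H : Subgroup (QuaternionGroup n)} {i : ZMod (2*n)} :
    i ∈ aPart H ↔ a i ∈ H := Iff.rfl

/-- the subgroup of the quaternion group built from an additive subgroup of `ZMod (2n)`. -/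
def aOnly (S : AddSubgroup (ZMod (2*n))) : Subgroup (QuaternionGroup n) where
  carrier := {x | match x with | a i => i ∈ S | xa _ => False}
  one_mem' := S.zero_mem
  mul_mem' := by
    rintro (i | i) (j | j) hi hj <;> simp_all
    exact S.add_mem hi hj
  inv_mem' := by
    rintro (i | i) hi <;> simp_all
    rw [inv_a']
    exact S.neg_mem hi

@[simp] theorem a_mem_aOnly {S : AddSubgroup (ZMod (2*n))} {i : ZMod (2*n)} :
    a i ∈ aOnly S ↔ i ∈ S := Iff.rfl

@[simp] theorem xa_not_mem_aOnly {S : AddSubgroup (ZMod (2*n))} {i : ZMod (2*n)} :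
    xa i ∉ aOnly S := fun h => h

/-- the subgroup of the quaternion group built from an additive subgroup `S` of `ZMod (2n)`
containing `n` together with a coset of `S` (as an element of the quotient). -/
def mixed (S : AddSubgroup (ZMod (2*n))) (hS : ((n : ℕ) : ZMod (2*n)) ∈ S)
    (c : ZMod (2*n) ⧸ S) : Subgroup (QuaternionGroup n) where
  carrier := {x | match x with
    | a i => i ∈ S
    | xa i => (QuotientAddGroup.mk i : ZMod (2*n) ⧸ S) = c}
  one_mem' := S.zero_mem
  mul_mem' := by
    rintro (i | i) (j | j) hi hj
    · rw [a_mul_a]; exact S.add_mem hi hj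
    · rw [a_mul_xa]
      show (QuotientAddGroup.mk (j - i) : ZMod (2*n) ⧸ S) = c
      rw [QuotientAddGroup.mk_sub, (QuotientAddGroup.eq_zero_iff i).mpr hi, sub_zero]
      exact hj
    · rw [xa_mul_a]
      show (QuotientAddGroup.mk (i + j) : ZMod (2*n) ⧸ S) = c
      rw [QuotientAddGroup.mk_add, (QuotientAddGroup.eq_zero_iff j).mpr hj, add_zero]
      exact hi
    · rw [xa_mul_xa]
      show ((n : ZMod (2*n)) + j - i) ∈ S
      have : (QuotientAddGroup.mk ((n : ZMod (2*n)) + j - i) : ZMod (2*n) ⧸ S) = 0 := by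
        rw [QuotientAddGroup.mk_sub, QuotientAddGroup.mk_add,
          (QuotientAddGroup.eq_zero_iff _).mpr hS, hi, hj, zero_add, sub_self]
      exact (QuotientAddGroup.eq_zero_iff _).mp this
  inv_mem' := by
    rintro (i | i) hi
    · rw [inv_a']; exact S.neg_mem hi
    · rw [inv_xa']
      show (QuotientAddGroup.mk ((n : ZMod (2*n)) + i) : ZMod (2*n) ⧸ S) = c
      rw [QuotientAddGroup.mk_add, (QuotientAddGroup.eq_zero_iff _).mpr hS, zero_add]
      exact hi

@[simp] theorem a_mem_mixed {S : AddSubgroup (ZMod (2*n))} {hS} {c} {i : ZMod (2*n)} :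
    a i ∈ mixed S hS c ↔ i ∈ S := Iff.rfl

@[simp] theorem xa_mem_mixed {S : AddSubgroup (ZMod (2*n))} {hS} {c} {i : ZMod (2*n)} :
    xa i ∈ mixed S hS c ↔ (QuotientAddGroup.mk i : ZMod (2*n) ⧸ S) = c := Iff.rfl

theorem n_mem_aPart {H : Subgroup (QuaternionGroup n)} {i : ZMod (2*n)} (h : xa i ∈ H) :
    ((n : ℕ) : ZMod (2*n)) ∈ aPart H := by
  have := H.mul_mem h h
  rwa [xa_sq'] at this

theorem two_n_cast : ((2 * n : ℕ) : ZMod (2*n)) = 0 := ZMod.natCast_self _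

theorem sub_mem_aPart {H : Subgroup (QuaternionGroup n)} {i j : ZMod (2*n)}
    (hi : xa i ∈ H) (hj : xa j ∈ H) : i - j ∈ aPart H := by
  have := H.mul_mem hj (H.inv_mem hi)
  rw [inv_xa', xa_mul_xa] at this
  have key : ((n : ZMod (2*n)) + ((n : ZMod (2*n)) + i) - j) = i - j := by
    have h2 : ((n : ZMod (2*n)) + (n : ZMod (2*n))) = 0 := by
      have := two_n_cast (n := n)
      push_cast at this
      linear_combination this
    linear_combination h2
  rwa [key] at this

theorem mk_eq_mk_of_xa_mem {H : Subgroup (QuaternionGroup n)} {i j : ZMod (2*n)}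
    (hi : xa i ∈ H) (hj : xa j ∈ H) :
    (QuotientAddGroup.mk i : ZMod (2*n) ⧸ aPart H) = QuotientAddGroup.mk j := by
  rw [QuotientAddGroup.eq]
  have := sub_mem_aPart hj hi
  rwa [sub_eq_neg_add] at this

theorem xa_mem_of_mk_eq {H : Subgroup (QuaternionGroup n)} {i j : ZMod (2*n)}
    (hi : xa i ∈ H)
    (h : (QuotientAddGroup.mk j : ZMod (2*n) ⧸ aPart H) = QuotientAddGroup.mk i) :
    xa j ∈ H := by
  rw [QuotientAddGroup.eq] at h
  have h2 : a (-j + i) ∈ H := h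
  have := H.mul_mem h2 hi
  rwa [a_mul_xa, show i - (-j + i) = j by ring] at this

theorem heq_mk {A : Type*} [AddGroup A] {S T : AddSubgroup A} (h : S = T) {x y : A}
    (hxy : (QuotientAddGroup.mk x : A ⧸ T) = QuotientAddGroup.mk y) :
    HEq (QuotientAddGroup.mk x : A ⧸ S) (QuotientAddGroup.mk y : A ⧸ T) := by
  subst h; exact heq_of_eq hxy

/-- Subgroups of the quaternion group containing no `xa` correspond to
additive subgroups of `ZMod (2n)`. -/
noncomputable def equivOne :
    {H : Subgroup (QuaternionGroup n) // ∀ i, xa i ∉ H} ≃ AddSubgroup (ZMod (2*n)) where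
  toFun H := aPart H.1
  invFun S := ⟨aOnly S, fun i h => h⟩
  left_inv := by
    rintro ⟨H, hH⟩
    apply Subtype.ext
    ext x
    rcases x with i | i
    · simp
    · simp [hH i]
  right_inv := by
    intro S
    ext i
    simp

/-- Subgroups of the quaternion group containing some `xa` correspond to pairs of an
additive subgroup of `ZMod (2n)` containing `n` and a coset thereof. -/
noncomputable def equivTwo :
    {H : Subgroup (QuaternionGroup n) // ∃ i, xa i ∈ H} ≃
      Σ S : {S : AddSubgroup (ZMod (2*n)) // ((n : ℕ) : ZMod (2*n)) ∈ S},
        ZMod (2*n) ⧸ S.val where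
  toFun H := ⟨⟨aPart H.1, n_mem_aPart H.2.choose_spec⟩, QuotientAddGroup.mk H.2.choose⟩
  invFun x := ⟨mixed x.1.1 x.1.2 x.2, by
    obtain ⟨i, hi⟩ := QuotientAddGroup.mk_surjective x.2
    exact ⟨i, hi⟩⟩
  left_inv := by
    rintro ⟨H, hH⟩
    apply Subtype.ext
    ext x
    rcases x with i | i
    · simp
    · simp only [xa_mem_mixed]
      constructor
      · intro h
        exact xa_mem_of_mk_eq hH.choose_spec h
      · intro h
        exact mk_eq_mk_of_xa_mem h hH.choose_spec
  right_inv := by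
    rintro ⟨⟨S, hS⟩, c⟩
    obtain ⟨i, rfl⟩ := QuotientAddGroup.mk_surjective c
    have h1 : aPart (mixed S hS (QuotientAddGroup.mk i)) = S := by
      ext j; simp
    apply Sigma.ext
    · exact Subtype.ext h1
    · apply heq_mk h1
      have he : ∃ j, xa j ∈ mixed S hS (QuotientAddGroup.mk i) := ⟨i, rfl⟩
      exact he.choose_spec

theorem nat_card_sigma {ι : Type*} [Fintype ι] {f : ι → Type*} [∀ i, Finite (f i)] :
    Nat.card (Σ i, f i) = ∑ i, Nat.card (f i) := by
  letI : ∀ i, Fintype (f i) := fun i => Fintype.ofFinite _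
  simp [Nat.card_eq_fintype_card]

end DicyclicCount

/-- `tau k` is the number of positive divisors of `k`. -/
def tau (k : ℕ) : ℕ := k.divisors.card

/-- `sigma' k` is the sum of the positive divisors of `k`. -/
def sigma' (k : ℕ) : ℕ := ∑ d ∈ k.divisors, d

open DicyclicCount AddSubgroup QuaternionGroup in
/-- The total number of subgroups of the dicyclic group `Dic_{4n}` equals `τ(2n) + σ(n)`. -/
theorem card_subgroup_quaternionGroup (n : ℕ) (hn : 0 < n) :
    Nat.card (Subgroup (QuaternionGroup n)) = tau (2 * n) + sigma' n := by
  haveI : NeZero n := ⟨hn.ne'⟩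
  haveI : NeZero (2 * n) := ⟨by omega⟩
  classical
  have hsplit : Nat.card (Subgroup (QuaternionGroup n)) =
      Nat.card {H : Subgroup (QuaternionGroup n) // ∀ i, xa i ∉ H} +
      Nat.card {H : Subgroup (QuaternionGroup n) // ¬ ∀ i, xa i ∉ H} := by
    rw [← Nat.card_sum]
    exact Nat.card_congr (Equiv.sumCompl _).symm
  rw [hsplit]
  congr 1
  -- Part 1 : τ(2n)
  · rw [Nat.card_congr (equivOne (n := n))]
    have E : {d : ℕ // d ∈ (2 * n).divisors} ≃ AddSubgroup (ZMod (2 * n)) := by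
      refine Equiv.ofBijective
        (fun d => zmultiples ((d.1 : ℕ) : ZMod (2 * n))) ⟨?_, ?_⟩
      · rintro ⟨d, hd⟩ ⟨e, he⟩ h
        rw [Nat.mem_divisors] at hd he
        exact Subtype.ext (zmultiples_natCast_injOn hd.1 he.1 h)
      · intro S
        obtain ⟨d, hd, hd0, rfl⟩ := exists_eq_zmultiples S
        exact ⟨⟨d, Nat.mem_divisors.mpr ⟨hd, by omega⟩⟩, rfl⟩
    rw [Nat.card_congr E.symm, Nat.card_eq_fintype_card, tau]
    exact Fintype.card_coe _
  -- Part 2 : σ(n)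
  · rw [Nat.card_congr (Equiv.subtypeEquivRight (q := fun H => ∃ i, xa i ∈ H)
      (fun H => by push_neg; rfl))]
    rw [Nat.card_congr (equivTwo (n := n)), nat_card_sigma]
    have hsum : ∑ S : {S : AddSubgroup (ZMod (2 * n)) // ((n : ℕ) : ZMod (2 * n)) ∈ S},
        Nat.card (ZMod (2 * n) ⧸ S.val) = ∑ d : {d : ℕ // d ∈ n.divisors}, (d.1 : ℕ) := by
      refine (Fintype.sum_bijective (fun d : {d : ℕ // d ∈ n.divisors} =>
        (⟨zmultiples ((d.1 : ℕ) : ZMod (2 * n)),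
          mem_zmultiples_natCast_self_div ((Nat.mem_divisors.mp d.2).1.mul_left 2)
            (Nat.mem_divisors.mp d.2).1⟩ :
          {S : AddSubgroup (ZMod (2 * n)) // ((n : ℕ) : ZMod (2 * n)) ∈ S}))
        ⟨?_, ?_⟩ _ _ (fun d =>
          (index_zmultiples_natCast ((Nat.mem_divisors.mp d.2).1.mul_left 2)).symm)).symm
      · rintro ⟨d, hd⟩ ⟨e, he⟩ h
        rw [Nat.mem_divisors] at hd he
        exact Subtype.ext (zmultiples_natCast_injOn (hd.1.mul_left 2) (he.1.mul_left 2)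
          (congrArg Subtype.val h))
      · rintro ⟨S, hS⟩
        obtain ⟨d, hd, hd0, rfl⟩ := exists_eq_zmultiples S
        have hdn : d ∣ n := by
          have := (mem_zmultiples_natCast_iff hd _).mp hS
          rwa [ZMod.val_cast_of_lt (by omega)] at this
        exact ⟨⟨d, Nat.mem_divisors.mpr ⟨hdn, by omega⟩⟩, rfl⟩
    rw [hsum, sigma']
    exact Finset.sum_coe_sort n.divisors (fun d => d)
end

section
/- For every positive integer n, the total number of subgroups of the dihedral group D_{2n} of order 2n equals τ(n) + σ(n). -/
open DihedralGroup AddSubgroup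

variable {n : ℕ}

/-- The rotation part of a subgroup. -/
def rotSub (H : Subgroup (DihedralGroup n)) : AddSubgroup (ZMod n) where
  carrier := {i | DihedralGroup.r i ∈ H}
  zero_mem' := H.one_mem
  add_mem' := by
    intro a b ha hb
    have := H.mul_mem ha hb
    simpa using this
  neg_mem' := by
    intro a ha
    exact H.inv_mem ha

def cycSub (A : AddSubgroup (ZMod n)) : Subgroup (DihedralGroup n) where
  carrier := {x | ∃ i ∈ A, x = DihedralGroup.r i}
  one_mem' := ⟨0, A.zero_mem, rfl⟩
  mul_mem' := by
    rintro _ _ ⟨i, hi, rfl⟩ ⟨j, hj, rfl⟩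
    exact ⟨i + j, A.add_mem hi hj, rfl⟩
  inv_mem' := by
    rintro _ ⟨i, hi, rfl⟩
    exact ⟨-i, A.neg_mem hi, rfl⟩

lemma mem_cycSub {A : AddSubgroup (ZMod n)} {x : DihedralGroup n} :
    x ∈ cycSub A ↔ ∃ i ∈ A, x = DihedralGroup.r i := Iff.rfl

def dihSub (A : AddSubgroup (ZMod n)) (c : ZMod n ⧸ A) : Subgroup (DihedralGroup n) where
  carrier := {x | (∃ i ∈ A, x = DihedralGroup.r i) ∨
    (∃ j : ZMod n, (j : ZMod n ⧸ A) = c ∧ x = DihedralGroup.sr j)}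
  one_mem' := Or.inl ⟨0, A.zero_mem, rfl⟩
  mul_mem' := by
    rintro _ _ (⟨i, hi, rfl⟩ | ⟨i, hi, rfl⟩) (⟨j, hj, rfl⟩ | ⟨j, hj, rfl⟩)
    · exact Or.inl ⟨i + j, A.add_mem hi hj, rfl⟩
    · refine Or.inr ⟨j - i, ?_, by simp⟩
      rw [← hj]
      have h1 : ((j - i : ZMod n) : ZMod n ⧸ A) = (j : ZMod n ⧸ A) - (i : ZMod n ⧸ A) := by
        simp
      rw [h1, (QuotientAddGroup.eq_zero_iff i).2 hi, sub_zero]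
    · refine Or.inr ⟨i + j, ?_, by simp⟩
      rw [← hi]
      have h1 : ((i + j : ZMod n) : ZMod n ⧸ A) = (i : ZMod n ⧸ A) + (j : ZMod n ⧸ A) := by
        simp
      rw [h1, (QuotientAddGroup.eq_zero_iff j).2 hj, add_zero]
    · refine Or.inl ⟨j - i, ?_, by simp⟩
      have h1 := hi.trans hj.symm
      rw [QuotientAddGroup.eq] at h1
      simpa [sub_eq_neg_add] using h1
  inv_mem' := by
    rintro _ (⟨i, hi, rfl⟩ | ⟨i, hi, rfl⟩)
    · exact Or.inl ⟨-i, A.neg_mem hi, rfl⟩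
    · exact Or.inr ⟨i, hi, rfl⟩

lemma mem_dihSub {A : AddSubgroup (ZMod n)} {c : ZMod n ⧸ A} {x : DihedralGroup n} :
    x ∈ dihSub A c ↔ (∃ i ∈ A, x = DihedralGroup.r i) ∨
      (∃ j : ZMod n, (j : ZMod n ⧸ A) = c ∧ x = DihedralGroup.sr j) := Iff.rfl

lemma sigma_eq_aux {A B : AddSubgroup (ZMod n)} (h : A = B) (a : ZMod n)
    (c : ZMod n ⧸ B) (hc : (a : ZMod n ⧸ B) = c) :
    (⟨A, (a : ZMod n ⧸ A)⟩ : Σ A : AddSubgroup (ZMod n), ZMod n ⧸ A) = ⟨B, c⟩ := by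
  subst h
  exact congrArg _ hc

open scoped Classical in
noncomputable def subEquiv (n : ℕ) :
    Subgroup (DihedralGroup n) ≃
      (AddSubgroup (ZMod n)) ⊕ (Σ A : AddSubgroup (ZMod n), ZMod n ⧸ A) where
  toFun H :=
    if h : ∃ j : ZMod n, DihedralGroup.sr j ∈ H then
      Sum.inr ⟨rotSub H, (h.choose : ZMod n ⧸ rotSub H)⟩
    else Sum.inl (rotSub H)
  invFun x :=
    match x with
    | Sum.inl A => cycSub A
    | Sum.inr ⟨A, c⟩ => dihSub A c
  left_inv := by
    intro H
    by_cases h : ∃ j : ZMod n, DihedralGroup.sr j ∈ H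
    · simp only [dif_pos h]
      have hj0 : DihedralGroup.sr h.choose ∈ H := h.choose_spec
      ext x
      rw [mem_dihSub]
      rcases x with i | j
      · constructor
        · rintro (⟨k, hk, hk2⟩ | ⟨k, hk, hk2⟩)
          · obtain rfl : i = k := by injection hk2
            exact hk
          · cases hk2
        · intro hx
          exact Or.inl ⟨i, hx, rfl⟩
      · constructor
        · rintro (⟨k, hk, hk2⟩ | ⟨k, hk, hk2⟩)
          · cases hk2
          · obtain rfl : j = k := by injection hk2
            rw [QuotientAddGroup.eq] at hk
            have h1 : DihedralGroup.r (-(-j + h.choose)) ∈ H := H.inv_mem hk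
            have h2 := H.mul_mem hj0 h1
            simp only [sr_mul_r] at h2
            have h3 : (h.choose + -(-j + h.choose) : ZMod n) = j := by ring
            rwa [h3] at h2
        · intro hx
          refine Or.inr ⟨j, ?_, rfl⟩
          rw [QuotientAddGroup.eq]
          have h1 := H.mul_mem hx hj0
          simp only [sr_mul_sr] at h1
          show DihedralGroup.r (-j + h.choose) ∈ H
          simpa [sub_eq_neg_add] using h1
    · simp only [dif_neg h]
      ext x
      rw [mem_cycSub]
      rcases x with i | j
      · constructor
        · rintro ⟨k, hk, hk2⟩
          obtain rfl : i = k := by injection hk2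
          exact hk
        · intro hx; exact ⟨i, hx, rfl⟩
      · constructor
        · rintro ⟨k, hk, hk2⟩
          cases hk2
        · intro hx
          exact absurd ⟨j, hx⟩ h
  right_inv := by
    rintro (A | ⟨A, c⟩)
    · have h : ¬ ∃ j : ZMod n, DihedralGroup.sr j ∈ cycSub A := by
        rintro ⟨j, ⟨k, _, hk⟩⟩
        cases hk
      simp only [dif_neg h]
      have hA : rotSub (cycSub A) = A := by
        ext i
        constructor
        · rintro ⟨k, hk, hk2⟩
          obtain rfl : i = k := by injection hk2
          exact hk
        · intro hi
          exact ⟨i, hi, rfl⟩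
      rw [hA]
    · obtain ⟨a, ha⟩ := QuotientAddGroup.mk_surjective c
      have h : ∃ j : ZMod n, DihedralGroup.sr j ∈ dihSub A c :=
        ⟨a, Or.inr ⟨a, ha, rfl⟩⟩
      simp only [dif_pos h]
      have hrot : rotSub (dihSub A c) = A := by
        ext i
        constructor
        · rintro (⟨k, hk, hk2⟩ | ⟨k, hk, hk2⟩)
          · obtain rfl : i = k := by injection hk2
            exact hk
          · cases hk2
        · intro hi
          exact Or.inl ⟨i, hi, rfl⟩
      have hch : DihedralGroup.sr h.choose ∈ dihSub A c := h.choose_spec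
      rcases hch with ⟨k, _, hk2⟩ | ⟨k, hk, hk2⟩
      · cases hk2
      · obtain rfl : h.choose = k := by injection hk2
        exact congrArg _ (sigma_eq_aux hrot h.choose c hk)

lemma card_zmult (n : ℕ) [NeZero n] {d : ℕ} (hd : d ∈ n.divisors) :
    Nat.card (zmultiples ((d : ℕ) : ZMod n)) = n / d := by
  obtain ⟨hdvd, hn⟩ := Nat.mem_divisors.1 hd
  rw [Nat.card_zmultiples, ZMod.addOrderOf_coe d hn, Nat.gcd_eq_right hdvd]

noncomputable def divEquiv (n : ℕ) [NeZero n] :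
    {d : ℕ // d ∈ n.divisors} ≃ AddSubgroup (ZMod n) :=
  Equiv.ofBijective (fun d => zmultiples ((d : ℕ) : ZMod n)) (by
    constructor
    · rintro ⟨c, hc⟩ ⟨d, hd⟩ h
      simp only at h
      have h1 : Nat.card (zmultiples ((c : ℕ) : ZMod n)) =
          Nat.card (zmultiples ((d : ℕ) : ZMod n)) := by rw [h]
      rw [card_zmult n hc, card_zmult n hd] at h1
      obtain ⟨hcd, hn⟩ := Nat.mem_divisors.1 hc
      obtain ⟨hdd, -⟩ := Nat.mem_divisors.1 hd
      have : c = d := by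
        rw [← Nat.div_div_self hcd hn, h1, Nat.div_div_self hdd hn]
      exact Subtype.ext this
    · intro A
      obtain ⟨a, ha⟩ := Int.subgroup_cyclic (A.comap (Int.castAddHom (ZMod n)))
      have hsurj : Function.Surjective (Int.castAddHom (ZMod n)) :=
        ZMod.intCast_surjective
      have hmap : A = (A.comap (Int.castAddHom (ZMod n))).map (Int.castAddHom (ZMod n)) :=
        (AddSubgroup.map_comap_eq_self_of_surjective hsurj A).symm
      have hz : A.comap (Int.castAddHom (ZMod n)) = zmultiples a := by
        rw [ha, ← AddSubgroup.zmultiples_eq_closure]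
      have hnmem : (n : ℤ) ∈ zmultiples a := by
        rw [← hz]
        simp only [AddSubgroup.mem_comap, Int.coe_castAddHom, Int.cast_natCast,
          ZMod.natCast_self]
        exact A.zero_mem
      have hdvd : a ∣ (n : ℤ) := Int.mem_zmultiples_iff.1 hnmem
      have ha0 : a ≠ 0 := by
        rintro rfl
        exact NeZero.ne n (by exact_mod_cast zero_dvd_iff.mp hdvd)
      have hd : a.natAbs ∣ n := by
        have := Int.natAbs_dvd_natAbs.mpr hdvd
        simpa using this
      refine ⟨⟨a.natAbs, Nat.mem_divisors.2 ⟨hd, NeZero.ne n⟩⟩, ?_⟩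
      have hAz : A = zmultiples ((a : ZMod n)) := by
        rw [hmap, hz, AddMonoidHom.map_zmultiples]
        rfl
      rw [hAz]
      show zmultiples ((a.natAbs : ZMod n)) = zmultiples (((a : ℤ) : ZMod n))
      rcases Int.natAbs_eq a with h | h
      · conv_rhs => rw [h, Int.cast_natCast]
      · conv_rhs => rw [h, Int.cast_neg, Int.cast_natCast]
        rw [zmultiples_neg])

/-- The total number of subgroups of the dihedral group `D_{2n}` equals `τ(n) + σ(n)`. -/
theorem card_subgroup_dihedralGroup (n : ℕ) (hn : 0 < n) :
    Nat.card (Subgroup (DihedralGroup n)) = tau n + sigma' n := by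
  haveI : NeZero n := ⟨hn.ne'⟩
  rw [Nat.card_congr (subEquiv n)]
  haveI fin1 : Finite (AddSubgroup (ZMod n)) := Finite.of_equiv _ (divEquiv n)
  rw [Nat.card_sum]
  congr 1
  · rw [← Nat.card_congr (divEquiv n), Nat.card_eq_finsetCard]
    rfl
  · have e2 : (Σ d : {d : ℕ // d ∈ n.divisors}, ZMod n ⧸ divEquiv n d) ≃
        Σ A : AddSubgroup (ZMod n), ZMod n ⧸ A :=
      Equiv.sigmaCongrLeft (divEquiv n)
    rw [← Nat.card_congr e2]
    letI : ∀ d : {d : ℕ // d ∈ n.divisors}, Fintype (ZMod n ⧸ divEquiv n d) :=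
      fun _ => Fintype.ofFinite _
    rw [Nat.card_eq_fintype_card, Fintype.card_sigma]
    have hterm : ∀ d : {d : ℕ // d ∈ n.divisors},
        Fintype.card (ZMod n ⧸ divEquiv n d) = (d : ℕ) := by
      intro d
      rw [← Nat.card_eq_fintype_card]
      have h1 : Nat.card (divEquiv n d) * Nat.card (ZMod n ⧸ divEquiv n d) = n := by
        rw [← AddSubgroup.index_eq_card, AddSubgroup.card_mul_index]
        simp [Nat.card_eq_fintype_card, ZMod.card]
      have h2 : Nat.card (divEquiv n d) = n / (d : ℕ) := card_zmult n d.2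
      obtain ⟨hdvd, hn0⟩ := Nat.mem_divisors.1 d.2
      rw [h2] at h1
      have h3 : (n / (d : ℕ)) * (d : ℕ) = n := Nat.div_mul_cancel hdvd
      have h4 : n / (d : ℕ) ≠ 0 :=
        Nat.div_ne_zero_iff_of_dvd hdvd |>.2 ⟨hn0, fun h => by simp [h] at hdvd; omega⟩
      exact Nat.eq_of_mul_eq_mul_left (Nat.pos_of_ne_zero h4) (h1.trans h3.symm)
    calc ∑ d : {d : ℕ // d ∈ n.divisors}, Fintype.card (ZMod n ⧸ divEquiv n d)
        = ∑ d : {d : ℕ // d ∈ n.divisors}, (d : ℕ) :=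
          Finset.sum_congr rfl (fun d _ => hterm d)
      _ = ∑ d ∈ n.divisors, d := Finset.sum_coe_sort n.divisors (fun d => d)
      _ = sigma' n := rfl
end

section
/- Let m ≥ 2 and set n' = 2^{m−1}. The total number of subgroups of the direct product ℤ₂ × D_{2n'} equals 5σ(n') + 3τ(n') − 2n' − 1 (which equals 2^{m+2} + 3m − 6). -/
section ProdZModTwo

variable {G : Type*} [Group G]

lemma zmodTwo_ofAdd_one_ne_one : (Multiplicative.ofAdd 1 : Multiplicative (ZMod 2)) ≠ 1 := by
  decide

lemma zmodTwo_eq_one_or (ε : Multiplicative (ZMod 2)) : ε = 1 ∨ ε = Multiplicative.ofAdd 1 := by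
  revert ε; decide

lemma zmodTwo_eq_iff_eq_one_iff {ε δ : Multiplicative (ZMod 2)} : ε = δ ↔ (ε = 1 ↔ δ = 1) := by
  revert ε δ; decide

lemma zmodTwo_mul_eq_one_iff {ε δ : Multiplicative (ZMod 2)} : ε * δ = 1 ↔ (ε = 1 ↔ δ = 1) := by
  revert ε δ; decide

def IndexAtMostTwo (N M : Subgroup G) : Prop :=
  N ≤ M ∧ ∀ x ∈ M, ∀ y ∈ M, x ∉ N → y ∉ N → x * y ∈ N

namespace IndexAtMostTwo

variable {N M : Subgroup G}

lemma refl (N : Subgroup G) : IndexAtMostTwo N N :=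
  ⟨le_rfl, fun _ hx _ _ hxN _ => absurd hx hxN⟩

lemma mul_mem_iff (h : IndexAtMostTwo N M) {x y : G} (hx : x ∈ M) (hy : y ∈ M) :
    x * y ∈ N ↔ (x ∈ N ↔ y ∈ N) := by
  by_cases hxN : x ∈ N <;> by_cases hyN : y ∈ N
  · exact iff_of_true (N.mul_mem hxN hyN) (iff_of_true hxN hyN)
  · simp [hxN, hyN, N.mul_mem_cancel_left hxN]
  · simp [hxN, hyN, N.mul_mem_cancel_right hyN]
  · exact iff_of_true (h.2 x hx y hy hxN hyN) (iff_of_false hxN hyN)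

lemma mul_self_mem (h : IndexAtMostTwo N M) {x : G} (hx : x ∈ M) : x * x ∈ N :=
  (h.mul_mem_iff hx hx).2 Iff.rfl

/-- The graph of `M → M ⧸ N ↪ ℤ₂`. -/
def graph (h : IndexAtMostTwo N M) : Subgroup (Multiplicative (ZMod 2) × G) where
  carrier := {p | p.2 ∈ M ∧ (p.2 ∈ N ↔ p.1 = 1)}
  one_mem' := ⟨M.one_mem, iff_of_true N.one_mem rfl⟩
  mul_mem' := by
    rintro ⟨ε, x⟩ ⟨δ, y⟩ ⟨hx, hxε⟩ ⟨hy, hyδ⟩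
    refine ⟨M.mul_mem hx hy, ?_⟩
    simp only [Prod.mk_mul_mk, h.mul_mem_iff hx hy, hxε, hyδ, zmodTwo_mul_eq_one_iff]
  inv_mem' := by
    rintro ⟨ε, x⟩ ⟨hx, hxε⟩
    exact ⟨M.inv_mem hx, by simpa using hxε⟩

lemma mem_graph (h : IndexAtMostTwo N M) {p : Multiplicative (ZMod 2) × G} :
    p ∈ h.graph ↔ p.2 ∈ M ∧ (p.2 ∈ N ↔ p.1 = 1) :=
  Iff.rfl

lemma one_mem_graph_iff (h : IndexAtMostTwo N M) {x : G} : (1, x) ∈ h.graph ↔ x ∈ N :=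
  ⟨fun hx => hx.2.2 rfl, fun hx => ⟨h.1 hx, iff_of_true hx rfl⟩⟩

end IndexAtMostTwo

def prodZModTwoSubgroup :
    (Σ M : Subgroup G, Option {N // IndexAtMostTwo N M}) → Subgroup (Multiplicative (ZMod 2) × G)
  | ⟨M, none⟩ => (⊤ : Subgroup (Multiplicative (ZMod 2))).prod M
  | ⟨_, some N⟩ => N.2.graph

lemma exists_mem_prodZModTwoSubgroup_iff (s : Σ M : Subgroup G, Option {N // IndexAtMostTwo N M})
    (x : G) : (∃ ε, (ε, x) ∈ prodZModTwoSubgroup s) ↔ x ∈ s.1 := by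
  obtain ⟨M, _ | ⟨N, h⟩⟩ := s
  · simp [prodZModTwoSubgroup, Subgroup.mem_prod]
  · refine ⟨fun ⟨_, hε⟩ => hε.1, fun hx => ?_⟩
    by_cases hxN : x ∈ N
    · exact ⟨1, hx, iff_of_true hxN rfl⟩
    · exact ⟨Multiplicative.ofAdd 1, hx, iff_of_false hxN zmodTwo_ofAdd_one_ne_one⟩

lemma ofAdd_one_mem_prodZModTwoSubgroup_iff
    (s : Σ M : Subgroup G, Option {N // IndexAtMostTwo N M}) :
    (Multiplicative.ofAdd 1, 1) ∈ prodZModTwoSubgroup s ↔ s.2 = none := by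
  obtain ⟨M, _ | ⟨N, h⟩⟩ := s
  · simp [prodZModTwoSubgroup, Subgroup.mem_prod]
  · simp [prodZModTwoSubgroup, h.mem_graph, N.one_mem]

lemma prodZModTwoSubgroup_injective : Function.Injective (prodZModTwoSubgroup (G := G)) := by
  rintro ⟨M, o⟩ ⟨M', o'⟩ hH
  obtain rfl : M = M' := by
    ext x
    have hx := exists_mem_prodZModTwoSubgroup_iff ⟨M, o⟩ x
    rwa [hH, exists_mem_prodZModTwoSubgroup_iff, Iff.comm] at hx
  have hnone := ofAdd_one_mem_prodZModTwoSubgroup_iff ⟨M, o⟩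
  rw [hH, ofAdd_one_mem_prodZModTwoSubgroup_iff] at hnone
  obtain _ | ⟨N, h⟩ := o <;> obtain _ | ⟨N', h'⟩ := o'
  · rfl
  · simp at hnone
  · simp at hnone
  · change h.graph = h'.graph at hH
    obtain rfl : N = N' := by
      ext x
      rw [← h.one_mem_graph_iff, ← h'.one_mem_graph_iff, hH]
    rfl

section Decompose

variable {H : Subgroup (Multiplicative (ZMod 2) × G)}

lemma mem_map_snd_iff {x : G} : x ∈ H.map (MonoidHom.snd _ G) ↔ ∃ ε, (ε, x) ∈ H := by
  simp

lemma eq_top_prod_map_snd (hg : (Multiplicative.ofAdd 1, 1) ∈ H) :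
    H = (⊤ : Subgroup (Multiplicative (ZMod 2))).prod (H.map (MonoidHom.snd _ G)) := by
  ext ⟨ε, x⟩
  simp only [Subgroup.mem_prod, Subgroup.mem_top, true_and, mem_map_snd_iff]
  refine ⟨fun hε => ⟨ε, hε⟩, fun ⟨δ, hδ⟩ => ?_⟩
  have hgg : (Multiplicative.ofAdd 1 : Multiplicative (ZMod 2)) * Multiplicative.ofAdd 1 = 1 :=
    zmodTwo_mul_eq_one_iff.2 Iff.rfl
  obtain rfl | rfl := zmodTwo_eq_one_or ε <;> obtain rfl | rfl := zmodTwo_eq_one_or δ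
  · exact hδ
  · simpa [hgg] using H.mul_mem hδ hg
  · simpa using H.mul_mem hδ hg
  · exact hδ

lemma fst_eq_of_mem_of_mem (hg : (Multiplicative.ofAdd 1, 1) ∉ H) {ε δ : Multiplicative (ZMod 2)}
    {x : G} (hε : (ε, x) ∈ H) (hδ : (δ, x) ∈ H) : ε = δ := by
  obtain rfl | rfl := zmodTwo_eq_one_or ε <;> obtain rfl | rfl := zmodTwo_eq_one_or δ
  · rfl
  · exact absurd (by simpa using H.mul_mem hδ (H.inv_mem hε)) hg
  · exact absurd (by simpa using H.mul_mem hε (H.inv_mem hδ)) hg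
  · rfl

lemma mem_comap_inr_iff_of_mem (hg : (Multiplicative.ofAdd 1, 1) ∉ H) {ε : Multiplicative (ZMod 2)}
    {x : G} (hε : (ε, x) ∈ H) : x ∈ H.comap (MonoidHom.inr _ G) ↔ ε = 1 :=
  ⟨fun hx => fst_eq_of_mem_of_mem hg hε hx, fun h1 => by subst h1; exact hε⟩

lemma indexAtMostTwo_comap_inr_map_snd (hg : (Multiplicative.ofAdd 1, 1) ∉ H) :
    IndexAtMostTwo (H.comap (MonoidHom.inr _ G)) (H.map (MonoidHom.snd _ G)) := by
  refine ⟨fun x hx => mem_map_snd_iff.2 ⟨1, hx⟩, fun x hx y hy hxN hyN => ?_⟩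
  obtain ⟨ε, hε⟩ := mem_map_snd_iff.1 hx
  obtain ⟨δ, hδ⟩ := mem_map_snd_iff.1 hy
  rw [mem_comap_inr_iff_of_mem hg hε] at hxN
  rw [mem_comap_inr_iff_of_mem hg hδ] at hyN
  have hεδ : ε * δ = 1 := zmodTwo_mul_eq_one_iff.2 (iff_of_false hxN hyN)
  simpa [hεδ] using H.mul_mem hε hδ

lemma eq_graph (hg : (Multiplicative.ofAdd 1, 1) ∉ H) :
    H = (indexAtMostTwo_comap_inr_map_snd hg).graph := by
  ext ⟨ε, x⟩
  rw [IndexAtMostTwo.mem_graph]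
  refine ⟨fun hε => ⟨mem_map_snd_iff.2 ⟨ε, hε⟩, mem_comap_inr_iff_of_mem hg hε⟩,
    fun ⟨hx, hxε⟩ => ?_⟩
  obtain ⟨δ, hδ⟩ := mem_map_snd_iff.1 hx
  have hεδ : ε = δ :=
    zmodTwo_eq_iff_eq_one_iff.2 (hxε.symm.trans (mem_comap_inr_iff_of_mem hg hδ))
  exact hεδ ▸ hδ

end Decompose

lemma prodZModTwoSubgroup_surjective : Function.Surjective (prodZModTwoSubgroup (G := G)) := by
  intro H
  by_cases hg : (Multiplicative.ofAdd 1, 1) ∈ H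
  · exact ⟨⟨_, none⟩, (eq_top_prod_map_snd hg).symm⟩
  · exact ⟨⟨_, some ⟨_, indexAtMostTwo_comap_inr_map_snd hg⟩⟩, (eq_graph hg).symm⟩

theorem card_subgroup_zmodTwo_prod_eq_sum {ι : Type*} [Fintype ι] (f : ι → Subgroup G)
    (hf : Function.Bijective f) :
    Nat.card (Subgroup (Multiplicative (ZMod 2) × G)) =
      ∑ c, (Nat.card {N // IndexAtMostTwo N (f c)} + 1) := by
  have := Finite.of_surjective f hf.2
  rw [← Nat.card_eq_of_bijective _ ⟨prodZModTwoSubgroup_injective, prodZModTwoSubgroup_surjective⟩,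
    ← Nat.card_congr (Equiv.sigmaCongrLeft (Equiv.ofBijective f hf)
      (β := fun M => Option {N // IndexAtMostTwo N M})), Nat.card_sigma]
  simp only [Finite.card_option, Equiv.ofBijective_apply]

end ProdZModTwo

section TwoPowMultiples

variable {k j j' : ℕ}

def twoPowMultiples (k j : ℕ) : AddSubgroup (ZMod (2 ^ k)) :=
  AddSubgroup.zmultiples (2 ^ j)

lemma intCast_mem_twoPowMultiples_iff (hj : j ≤ k) (t : ℤ) :
    (t : ZMod (2 ^ k)) ∈ twoPowMultiples k j ↔ 2 ^ j ∣ t := by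
  refine ⟨fun ⟨z, hz⟩ => ?_, fun ⟨u, hu⟩ => ⟨u, by simp [hu, mul_comm]⟩⟩
  have hk : ((2 ^ k : ℕ) : ℤ) ∣ t - z * 2 ^ j := by
    rw [← ZMod.intCast_eq_intCast_iff_dvd_sub, ← hz]
    push_cast [zsmul_eq_mul]
    rfl
  push_cast at hk
  have := dvd_add ((pow_dvd_pow 2 hj).trans hk) (dvd_mul_left (2 ^ j) z)
  rwa [sub_add_cancel] at this

lemma two_pow_mem_twoPowMultiples_iff (hj : j ≤ k) :
    (2 : ZMod (2 ^ k)) ^ j' ∈ twoPowMultiples k j ↔ j ≤ j' := by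
  have h := intCast_mem_twoPowMultiples_iff hj (2 ^ j')
  push_cast at h
  rw [h, pow_dvd_pow_iff two_ne_zero (by decide)]

lemma two_pow_notMem_twoPowMultiples_succ (hj : j < k) :
    (2 : ZMod (2 ^ k)) ^ j ∉ twoPowMultiples k (j + 1) := by
  rw [two_pow_mem_twoPowMultiples_iff hj]
  omega

lemma twoPowMultiples_le_iff (hj' : j' ≤ k) :
    twoPowMultiples k j ≤ twoPowMultiples k j' ↔ j' ≤ j := by
  rw [twoPowMultiples, AddSubgroup.zmultiples_le, two_pow_mem_twoPowMultiples_iff hj']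

lemma twoPowMultiples_inj (hj : j ≤ k) (hj' : j' ≤ k) :
    twoPowMultiples k j = twoPowMultiples k j' ↔ j = j' := by
  rw [le_antisymm_iff, twoPowMultiples_le_iff hj', twoPowMultiples_le_iff hj]
  omega

lemma exists_eq_twoPowMultiples (A : AddSubgroup (ZMod (2 ^ k))) :
    ∃ j ≤ k, A = twoPowMultiples k j := by
  set φ := Int.castAddHom (ZMod (2 ^ k))
  obtain ⟨g, hg⟩ := Int.subgroup_cyclic (A.comap φ)
  rw [← AddSubgroup.zmultiples_eq_closure, ← Int.zmultiples_natAbs] at hg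
  have hgk : (g.natAbs : ℤ) ∣ 2 ^ k := by
    have h0 : (2 : ZMod (2 ^ k)) ^ k = 0 := by exact_mod_cast ZMod.natCast_self (2 ^ k)
    rw [← Int.mem_zmultiples_iff, ← hg, AddSubgroup.mem_comap]
    simp [φ, h0]
  obtain ⟨j, hj, hgj⟩ := (Nat.dvd_prime_pow Nat.prime_two).1 (by exact_mod_cast hgk)
  refine ⟨j, hj, ?_⟩
  rw [← AddSubgroup.map_comap_eq_self_of_surjective (f := φ) ZMod.intCast_surjective A, hg,
    AddMonoidHom.map_zmultiples, hgj]
  simp [φ, twoPowMultiples]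

lemma sub_mem_twoPowMultiples_succ (hj : j < k) {a b : ZMod (2 ^ k)}
    (ha : a ∈ twoPowMultiples k j) (hb : b ∈ twoPowMultiples k j)
    (ha' : a ∉ twoPowMultiples k (j + 1)) (hb' : b ∉ twoPowMultiples k (j + 1)) :
    a - b ∈ twoPowMultiples k (j + 1) := by
  obtain ⟨s, rfl⟩ := ZMod.intCast_surjective a
  obtain ⟨t, rfl⟩ := ZMod.intCast_surjective b
  rw [← Int.cast_sub]
  simp only [intCast_mem_twoPowMultiples_iff hj, intCast_mem_twoPowMultiples_iff hj.le] at *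
  obtain ⟨u, rfl⟩ := ha
  obtain ⟨v, rfl⟩ := hb
  rw [pow_succ, ← mul_sub] at *
  rw [mul_dvd_mul_iff_left (by positivity)] at *
  omega

lemma natCast_sub_natCast_mem_twoPowMultiples_iff (hj : j ≤ k) {i i' : ℕ} (hi : i < 2 ^ j)
    (hi' : i' < 2 ^ j) : (i - i' : ZMod (2 ^ k)) ∈ twoPowMultiples k j ↔ i = i' := by
  have h := intCast_mem_twoPowMultiples_iff hj (i - i')
  push_cast at h
  rw [h]
  refine ⟨fun hdvd => ?_, by rintro rfl; simp⟩
  zify at hi hi'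
  have := Int.eq_zero_of_abs_lt_dvd hdvd (by rw [abs_lt]; constructor <;> omega)
  omega

lemma sub_val_mod_mem_twoPowMultiples (hj : j ≤ k) (a : ZMod (2 ^ k)) :
    a - (a.val % 2 ^ j : ℕ) ∈ twoPowMultiples k j := by
  have h := intCast_mem_twoPowMultiples_iff hj ((a.val - a.val % 2 ^ j : ℕ) : ℤ)
  rw [Int.cast_natCast, Nat.cast_sub (Nat.mod_le _ _), ZMod.natCast_zmod_val] at h
  rw [h]
  exact_mod_cast Nat.dvd_sub_mod _

end TwoPowMultiples

namespace DihedralGroup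

variable {n : ℕ}

def rotSubgroup (A : AddSubgroup (ZMod n)) : Subgroup (DihedralGroup n) where
  carrier := {x | match x with | r a => a ∈ A | sr _ => False}
  one_mem' := A.zero_mem
  mul_mem' := by
    rintro (a | a) (b | b) ha hb
    exacts [A.add_mem ha hb, hb.elim, ha.elim, ha.elim]
  inv_mem' := by
    rintro (a | a) ha
    exacts [A.neg_mem ha, ha]

/-- The subgroup generated by the rotations `r a`, `a ∈ A`, and the reflection `sr i`. -/
def dihSubgroup (A : AddSubgroup (ZMod n)) (i : ZMod n) : Subgroup (DihedralGroup n) where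
  carrier := {x | match x with | r a => a ∈ A | sr t => t - i ∈ A}
  one_mem' := A.zero_mem
  mul_mem' := by
    rintro (a | a) (b | b) ha hb <;> simp only [Set.mem_ofPred_eq, r_mul_r, r_mul_sr, sr_mul_r,
      sr_mul_sr] at ha hb ⊢
    · exact A.add_mem ha hb
    · convert A.sub_mem hb ha using 1; ring
    · convert A.add_mem ha hb using 1; ring
    · convert A.sub_mem hb ha using 1; ring
  inv_mem' := by
    rintro (a | a) ha
    exacts [A.neg_mem ha, ha]

variable {A B : AddSubgroup (ZMod n)} {i i' a : ZMod n}

@[simp] lemma r_mem_rotSubgroup : r a ∈ rotSubgroup A ↔ a ∈ A := Iff.rfl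
@[simp] lemma sr_notMem_rotSubgroup : sr a ∉ rotSubgroup A := id
@[simp] lemma r_mem_dihSubgroup : r a ∈ dihSubgroup A i ↔ a ∈ A := Iff.rfl
@[simp] lemma sr_mem_dihSubgroup : sr a ∈ dihSubgroup A i ↔ a - i ∈ A := Iff.rfl

def rotPart (H : Subgroup (DihedralGroup n)) : AddSubgroup (ZMod n) where
  carrier := {a | r a ∈ H}
  zero_mem' := H.one_mem
  add_mem' ha hb := by simpa using H.mul_mem ha hb
  neg_mem' ha := by simpa using H.inv_mem ha

theorem eq_rotSubgroup_or_eq_dihSubgroup (H : Subgroup (DihedralGroup n)) :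
    H = rotSubgroup (rotPart H) ∨ ∃ i, H = dihSubgroup (rotPart H) i := by
  by_cases hs : ∃ i, sr i ∈ H
  · obtain ⟨i, hi⟩ := hs
    refine Or.inr ⟨i, ?_⟩
    ext (a | t)
    · rfl
    · change sr t ∈ H ↔ r (t - i) ∈ H
      rw [← H.mul_mem_cancel_left hi, sr_mul_sr, ← H.inv_mem_iff, inv_r, neg_sub]
  · push Not at hs
    refine Or.inl ?_
    ext (a | t)
    · rfl
    · simp [hs t]

lemma rotSubgroup_le_rotSubgroup_iff : rotSubgroup A ≤ rotSubgroup B ↔ A ≤ B :=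
  ⟨fun h a ha => h (r_mem_rotSubgroup.2 ha), fun h => by rintro (a | a) ha; exacts [h ha, ha]⟩

lemma rotSubgroup_le_dihSubgroup_iff : rotSubgroup A ≤ dihSubgroup B i ↔ A ≤ B :=
  ⟨fun h a ha => h (r_mem_rotSubgroup.2 ha), fun h => by rintro (a | a) ha; exacts [h ha, ha.elim]⟩

lemma not_dihSubgroup_le_rotSubgroup : ¬ dihSubgroup A i ≤ rotSubgroup B :=
  fun h => sr_notMem_rotSubgroup (h (sr_mem_dihSubgroup.2 ((sub_self i).symm ▸ A.zero_mem)))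

lemma dihSubgroup_le_dihSubgroup_iff : dihSubgroup A i ≤ dihSubgroup B i' ↔ A ≤ B ∧ i - i' ∈ B := by
  refine ⟨fun h => ⟨fun a ha => h (r_mem_dihSubgroup.2 ha),
    h (sr_mem_dihSubgroup.2 ((sub_self i).symm ▸ A.zero_mem))⟩, fun ⟨hAB, hi⟩ => ?_⟩
  rintro (a | t) ha
  · exact hAB ha
  · simpa using B.add_mem (hAB ha) hi

lemma rotSubgroup_injective : Function.Injective (rotSubgroup (n := n)) := fun _ _ h =>
  le_antisymm (rotSubgroup_le_rotSubgroup_iff.1 h.le) (rotSubgroup_le_rotSubgroup_iff.1 h.ge)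

lemma rotSubgroup_ne_dihSubgroup : rotSubgroup A ≠ dihSubgroup B i :=
  fun h => not_dihSubgroup_le_rotSubgroup h.ge

lemma dihSubgroup_eq_dihSubgroup_iff : dihSubgroup A i = dihSubgroup B i' ↔ A = B ∧ i - i' ∈ A := by
  simp only [le_antisymm_iff (a := dihSubgroup A i), dihSubgroup_le_dihSubgroup_iff]
  constructor
  · rintro ⟨⟨hAB, -⟩, hBA, hi⟩
    exact ⟨le_antisymm hAB hBA, by rwa [← neg_sub, neg_mem_iff]⟩
  · rintro ⟨rfl, hi⟩
    exact ⟨⟨le_rfl, hi⟩, le_rfl, by rwa [← neg_sub, neg_mem_iff]⟩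

lemma indexAtMostTwo_rotSubgroup (hBA : B ≤ A)
    (hB : ∀ a ∈ A, ∀ b ∈ A, a ∉ B → b ∉ B → a - b ∈ B) :
    IndexAtMostTwo (rotSubgroup B) (rotSubgroup A) := by
  refine ⟨rotSubgroup_le_rotSubgroup_iff.2 hBA, ?_⟩
  rintro (a | a) ha (b | b) hb haB hbB
  · simpa using hB a ha (-b) (A.neg_mem hb) haB (by simpa using hbB)
  all_goals simp_all

lemma indexAtMostTwo_rotSubgroup_dihSubgroup (A : AddSubgroup (ZMod n)) (i : ZMod n) :
    IndexAtMostTwo (rotSubgroup A) (dihSubgroup A i) := by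
  refine ⟨rotSubgroup_le_dihSubgroup_iff.2 le_rfl, ?_⟩
  rintro (a | s) ha (b | t) hb haA hbA
  · exact absurd ha haA
  · exact absurd ha haA
  · exact absurd hb hbA
  · simpa using A.sub_mem hb ha

lemma indexAtMostTwo_dihSubgroup (hBA : B ≤ A)
    (hB : ∀ a ∈ A, ∀ b ∈ A, a ∉ B → b ∉ B → a - b ∈ B) (hi : i' - i ∈ A) :
    IndexAtMostTwo (dihSubgroup B i') (dihSubgroup A i) := by
  have hA : ∀ {t}, t - i ∈ A → t - i' ∈ A := fun ht => by simpa using A.sub_mem ht hi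
  refine ⟨dihSubgroup_le_dihSubgroup_iff.2 ⟨hBA, hi⟩, ?_⟩
  rintro (a | s) ha (b | t) hb haB hbB <;>
    simp only [r_mem_dihSubgroup, sr_mem_dihSubgroup, r_mul_r, r_mul_sr, sr_mul_r, sr_mul_sr]
      at ha hb haB hbB ⊢
  · simpa using hB a ha (-b) (A.neg_mem hb) haB (by simpa using hbB)
  · convert hB _ (hA hb) a ha hbB haB using 1; ring
  · convert hB _ (hA ha) (-b) (A.neg_mem hb) haB (by simpa using hbB) using 1; ring
  · convert hB _ (hA hb) _ (hA ha) hbB haB using 1; ring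

end DihedralGroup

section DihedralTwoPow

open DihedralGroup

variable {k j : ℕ}

lemma exists_eq_rotSubgroup_or_dihSubgroup_twoPow (H : Subgroup (DihedralGroup (2 ^ k))) :
    (∃ j ≤ k, H = rotSubgroup (twoPowMultiples k j)) ∨
      ∃ j ≤ k, ∃ i, H = dihSubgroup (twoPowMultiples k j) i := by
  obtain ⟨j, hj, hA⟩ := exists_eq_twoPowMultiples (rotPart H)
  rcases eq_rotSubgroup_or_eq_dihSubgroup H with hH | ⟨i, hH⟩
  · exact Or.inl ⟨j, hj, hA ▸ hH⟩
  · exact Or.inr ⟨j, hj, i, hA ▸ hH⟩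

lemma le_succ_of_indexAtMostTwo {j' : ℕ} (hj' : j' ≤ k) {N M : Subgroup (DihedralGroup (2 ^ k))}
    (h : IndexAtMostTwo N M) (hN : ∀ a, r a ∈ N → a ∈ twoPowMultiples k j')
    (hM : r (2 ^ j) ∈ M) : j' ≤ j + 1 := by
  have := hN _ (h.mul_self_mem hM)
  rwa [← two_mul, ← pow_succ', two_pow_mem_twoPowMultiples_iff hj'] at this

theorem indexAtMostTwo_rotSubgroup_twoPow_iff (hj : j ≤ k) {N : Subgroup (DihedralGroup (2 ^ k))} :
    IndexAtMostTwo N (rotSubgroup (twoPowMultiples k j)) ↔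
      N = rotSubgroup (twoPowMultiples k j) ∨
        j < k ∧ N = rotSubgroup (twoPowMultiples k (j + 1)) := by
  refine ⟨fun h => ?_, ?_⟩
  · obtain ⟨j', hj', rfl⟩ | ⟨j', hj', i, rfl⟩ := exists_eq_rotSubgroup_or_dihSubgroup_twoPow N
    · have hle := (twoPowMultiples_le_iff hj).1 (rotSubgroup_le_rotSubgroup_iff.1 h.1)
      have hge := le_succ_of_indexAtMostTwo hj' h (fun _ => id)
        (r_mem_rotSubgroup.2 ((two_pow_mem_twoPowMultiples_iff hj).2 le_rfl))
      obtain rfl | rfl : j' = j ∨ j' = j + 1 := by omega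
      · exact Or.inl rfl
      · exact Or.inr ⟨by omega, rfl⟩
    · exact absurd h.1 not_dihSubgroup_le_rotSubgroup
  · rintro (rfl | ⟨hjk, rfl⟩)
    · exact IndexAtMostTwo.refl _
    · exact indexAtMostTwo_rotSubgroup ((twoPowMultiples_le_iff hj).2 j.le_succ)
        (fun _ ha _ hb => sub_mem_twoPowMultiples_succ hjk ha hb)

theorem indexAtMostTwo_dihSubgroup_twoPow_iff (hj : j ≤ k) {i : ZMod (2 ^ k)}
    {N : Subgroup (DihedralGroup (2 ^ k))} :
    IndexAtMostTwo N (dihSubgroup (twoPowMultiples k j) i) ↔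
      N = dihSubgroup (twoPowMultiples k j) i ∨ N = rotSubgroup (twoPowMultiples k j) ∨
        j < k ∧ (N = dihSubgroup (twoPowMultiples k (j + 1)) i ∨
          N = dihSubgroup (twoPowMultiples k (j + 1)) (i + 2 ^ j)) := by
  have h2j : (2 : ZMod (2 ^ k)) ^ j ∈ twoPowMultiples k j :=
    (two_pow_mem_twoPowMultiples_iff hj).2 le_rfl
  refine ⟨fun h => ?_, ?_⟩
  · obtain ⟨j', hj', rfl⟩ | ⟨j', hj', i', rfl⟩ := exists_eq_rotSubgroup_or_dihSubgroup_twoPow N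
    · have hle := (twoPowMultiples_le_iff hj).1 (rotSubgroup_le_dihSubgroup_iff.1 h.1)
      have hmul := h.2 (sr i) (by simp) (sr (i + 2 ^ j)) (by simpa using h2j)
        sr_notMem_rotSubgroup sr_notMem_rotSubgroup
      rw [sr_mul_sr, add_sub_cancel_left, r_mem_rotSubgroup,
        two_pow_mem_twoPowMultiples_iff hj'] at hmul
      obtain rfl : j' = j := by omega
      exact Or.inr (Or.inl rfl)
    · obtain ⟨hA, hi⟩ := dihSubgroup_le_dihSubgroup_iff.1 h.1
      have hle := (twoPowMultiples_le_iff hj).1 hA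
      have hge := le_succ_of_indexAtMostTwo hj' h (fun _ => id) (r_mem_dihSubgroup.2 h2j)
      obtain rfl | rfl : j' = j ∨ j' = j + 1 := by omega
      · exact Or.inl (dihSubgroup_eq_dihSubgroup_iff.2 ⟨rfl, hi⟩)
      refine Or.inr (Or.inr ⟨by omega, ?_⟩)
      by_cases hi' : i' - i ∈ twoPowMultiples k (j + 1)
      · exact Or.inl (dihSubgroup_eq_dihSubgroup_iff.2 ⟨rfl, hi'⟩)
      · refine Or.inr (dihSubgroup_eq_dihSubgroup_iff.2 ⟨rfl, ?_⟩)
        rw [← sub_sub]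
        exact sub_mem_twoPowMultiples_succ (by omega) hi h2j hi'
          (two_pow_notMem_twoPowMultiples_succ (by omega))
  · rintro (rfl | rfl | ⟨hjk, rfl | rfl⟩)
    · exact IndexAtMostTwo.refl _
    · exact indexAtMostTwo_rotSubgroup_dihSubgroup _ _
    all_goals
      refine indexAtMostTwo_dihSubgroup ((twoPowMultiples_le_iff hj).2 j.le_succ)
        (fun _ ha _ hb => sub_mem_twoPowMultiples_succ hjk ha hb) ?_
    · simp
    · simpa using h2j

lemma card_indexAtMostTwo_rotSubgroup_twoPow (hj : j ≤ k) :
    Nat.card {N // IndexAtMostTwo N (rotSubgroup (twoPowMultiples k j))} =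
      if j < k then 2 else 1 := by
  rw [← Set.coe_ofPred, Nat.card_coe_set_eq]
  split_ifs with hjk
  · rw [show {N | IndexAtMostTwo N _} = {rotSubgroup (twoPowMultiples k j),
        rotSubgroup (twoPowMultiples k (j + 1))} from
      Set.ext fun N => by simp [indexAtMostTwo_rotSubgroup_twoPow_iff hj, hjk]]
    refine Set.ncard_pair (rotSubgroup_injective.ne ?_)
    rw [Ne, twoPowMultiples_inj hj hjk]
    omega
  · rw [show {N | IndexAtMostTwo N _} = {rotSubgroup (twoPowMultiples k j)} from
      Set.ext fun N => by simp [indexAtMostTwo_rotSubgroup_twoPow_iff hj, hjk]]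
    exact Set.ncard_singleton _

lemma card_indexAtMostTwo_dihSubgroup_twoPow (hj : j ≤ k) (i : ZMod (2 ^ k)) :
    Nat.card {N // IndexAtMostTwo N (dihSubgroup (twoPowMultiples k j) i)} =
      if j < k then 4 else 2 := by
  rw [← Set.coe_ofPred, Nat.card_coe_set_eq]
  split_ifs with hjk
  · rw [show {N | IndexAtMostTwo N _} = {rotSubgroup (twoPowMultiples k j),
        dihSubgroup (twoPowMultiples k j) i, dihSubgroup (twoPowMultiples k (j + 1)) i,
        dihSubgroup (twoPowMultiples k (j + 1)) (i + 2 ^ j)} from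
      Set.ext fun N => by simp [indexAtMostTwo_dihSubgroup_twoPow_iff hj, hjk]; tauto]
    have hlevel : ∀ i i', dihSubgroup (twoPowMultiples k j) i ≠
        dihSubgroup (twoPowMultiples k (j + 1)) i' := fun i i' h => by
      have := (twoPowMultiples_inj hj hjk).1 (dihSubgroup_eq_dihSubgroup_iff.1 h).1
      omega
    have htop : dihSubgroup (twoPowMultiples k (j + 1)) i ≠
        dihSubgroup (twoPowMultiples k (j + 1)) (i + 2 ^ j) := fun h => by
      have := (dihSubgroup_eq_dihSubgroup_iff.1 h).2
      rw [sub_add_cancel_left, neg_mem_iff] at this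
      exact two_pow_notMem_twoPowMultiples_succ hjk this
    rw [Set.ncard_insert_of_notMem, Set.ncard_insert_of_notMem, Set.ncard_pair htop]
    · simp [hlevel]
    · simp [rotSubgroup_ne_dihSubgroup]
  · rw [show {N | IndexAtMostTwo N _} = {dihSubgroup (twoPowMultiples k j) i,
        rotSubgroup (twoPowMultiples k j)} from
      Set.ext fun N => by simp [indexAtMostTwo_dihSubgroup_twoPow_iff hj, hjk]]
    exact Set.ncard_pair rotSubgroup_ne_dihSubgroup.symm

/-- `inl j` codes `rotSubgroup (twoPowMultiples k j)` and `inr ⟨j, i⟩` codes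
`dihSubgroup (twoPowMultiples k j) i`, with `i < 2 ^ j` the least representative of its coset. -/
def dihedralSubgroupOfCode (k : ℕ) :
    Fin (k + 1) ⊕ (Σ j : Fin (k + 1), Fin (2 ^ (j : ℕ))) → Subgroup (DihedralGroup (2 ^ k))
  | .inl j => rotSubgroup (twoPowMultiples k j)
  | .inr ⟨j, i⟩ => dihSubgroup (twoPowMultiples k j) (i : ℕ)

theorem dihedralSubgroupOfCode_bijective (k : ℕ) :
    Function.Bijective (dihedralSubgroupOfCode k) := by
  refine ⟨?_, fun H => ?_⟩
  · rintro (j | ⟨j, i⟩) (j' | ⟨j', i'⟩) h <;> simp only [dihedralSubgroupOfCode] at h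
    · rw [rotSubgroup_injective.eq_iff, twoPowMultiples_inj j.is_le j'.is_le] at h
      rw [Fin.ext h]
    · exact absurd h rotSubgroup_ne_dihSubgroup
    · exact absurd h.symm rotSubgroup_ne_dihSubgroup
    · obtain ⟨hA, hi⟩ := dihSubgroup_eq_dihSubgroup_iff.1 h
      obtain rfl := Fin.ext ((twoPowMultiples_inj j.is_le j'.is_le).1 hA)
      rw [natCast_sub_natCast_mem_twoPowMultiples_iff j.is_le i.is_lt i'.is_lt] at hi
      rw [Fin.ext hi]
  · obtain ⟨j, hj, rfl⟩ | ⟨j, hj, i, rfl⟩ := exists_eq_rotSubgroup_or_dihSubgroup_twoPow H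
    · exact ⟨.inl ⟨j, by omega⟩, rfl⟩
    · refine ⟨.inr ⟨⟨j, by omega⟩, ⟨i.val % 2 ^ j, Nat.mod_lt _ (by positivity)⟩⟩,
        dihSubgroup_eq_dihSubgroup_iff.2 ⟨rfl, ?_⟩⟩
      rw [← neg_sub, neg_mem_iff]
      exact sub_val_mod_mem_twoPowMultiples hj i

end DihedralTwoPow

theorem card_subgroup_zmodTwo_prod_dihedralGroup_two_pow (k : ℕ) :
    Nat.card (Subgroup (Multiplicative (ZMod 2) × DihedralGroup (2 ^ k))) =
      2 ^ (k + 3) + 3 * k - 3 := by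
  rw [card_subgroup_zmodTwo_prod_eq_sum _ (dihedralSubgroupOfCode_bijective k),
    Fintype.sum_sum_type, Fintype.sum_sigma]
  simp only [dihedralSubgroupOfCode, card_indexAtMostTwo_rotSubgroup_twoPow (Fin.is_le _),
    card_indexAtMostTwo_dihSubgroup_twoPow (Fin.is_le _), Finset.sum_const, Finset.card_univ,
    Fintype.card_fin, smul_eq_mul]
  rw [Fin.sum_univ_eq_sum_range (fun j => (if j < k then 2 else 1) + 1),
    Fin.sum_univ_eq_sum_range (fun j => 2 ^ j * ((if j < k then 4 else 2) + 1)),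
    Finset.sum_range_succ, Finset.sum_range_succ]
  have hrot : ∑ j ∈ Finset.range k, ((if j < k then 2 else 1) + 1) = 3 * k := by
    rw [Finset.sum_congr rfl fun j hj => by rw [if_pos (Finset.mem_range.1 hj)]]
    simp [mul_comm]
  have hdih : ∑ j ∈ Finset.range k, 2 ^ j * ((if j < k then 4 else 2) + 1) = (2 ^ k - 1) * 5 := by
    rw [Finset.sum_congr rfl fun j hj => by rw [if_pos (Finset.mem_range.1 hj)],
      ← Finset.sum_mul, Nat.geomSum_eq le_rfl]
    simp
  have : 1 ≤ 2 ^ k := Nat.one_le_two_pow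
  simp only [hrot, hdih, lt_irrefl, if_false, pow_add]
  omega

lemma tau_two_pow (k : ℕ) : tau (2 ^ k) = k + 1 := by
  rw [tau, Nat.divisors_prime_pow Nat.prime_two, Finset.card_map, Finset.card_range]

lemma sigma'_two_pow (k : ℕ) : sigma' (2 ^ k) = 2 ^ (k + 1) - 1 := by
  rw [sigma', Nat.divisors_prime_pow Nat.prime_two, Finset.sum_map]
  simpa using Nat.geomSum_eq le_rfl (k + 1)

/-- For `m ≥ 2` and `n' = 2^{m−1}`, the number of subgroups of `ℤ₂ × D_{2n'}` equals
`5σ(n') + 3τ(n') − 2n' − 1`, which equals `2^{m+2} + 3m − 6`. -/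
theorem card_subgroup_Z2_prod_dihedral (m : ℕ) (hm : 2 ≤ m) (n' : ℕ) (hn' : n' = 2 ^ (m - 1)) :
    Nat.card (Subgroup (Multiplicative (ZMod 2) × DihedralGroup n'))
        = 5 * sigma' n' + 3 * tau n' - 2 * n' - 1 ∧
      5 * sigma' n' + 3 * tau n' - 2 * n' - 1 = 2 ^ (m + 2) + 3 * m - 6 := by
  obtain ⟨k, rfl⟩ : ∃ k, m = k + 1 := ⟨m - 1, by omega⟩
  subst hn'
  rw [Nat.add_sub_cancel, card_subgroup_zmodTwo_prod_dihedralGroup_two_pow, tau_two_pow,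
    sigma'_two_pow]
  have : 1 ≤ 2 ^ k := Nat.one_le_two_pow
  simp only [pow_succ]
  omega
end

section
/- For every positive integer n, the number of cyclic subgroups of the dicyclic group Dic_{4n} equals τ(2n) + n. -/
/-!
A finite cyclic group has exactly one subgroup of each order dividing its order, so the cyclic
subgroup `⟨a 1⟩` of order `2n` has `τ(2n)` subgroups, all of them cyclic. Every other cyclic
subgroup is generated by one of the `2n` elements `xa i` outside `⟨a 1⟩`. Such an element has
order 4, its square is `a n` and its cube is `xa (i + n)`, so `⟨xa i⟩ = ⟨xa j⟩` exactly when
`j = i` or `j = i + n`: these give `n` further cyclic subgroups.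
-/

open Subgroup QuaternionGroup

namespace IsCyclic

variable {G : Type*} [Group G] [Finite G] [IsCyclic G]

theorem coe_subgroup_eq_setOf_pow_natCard_eq_one (H : Subgroup G) :
    (H : Set G) = {x | x ^ Nat.card H = 1} := by
  classical
  cases nonempty_fintype G
  refine Set.eq_of_subset_of_ncard_le (fun x hx => ?_) ?_ (Set.toFinite _)
  · exact congrArg Subtype.val (pow_card_eq_one' (x := (⟨x, hx⟩ : H)))
  · calc {x : G | x ^ Nat.card H = 1}.ncard ≤ Nat.card H := by
          rw [Set.ncard_eq_toFinset_card', Set.toFinset_ofPred]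
          exact card_pow_eq_one_le Nat.card_pos
      _ = (H : Set G).ncard := (Nat.card_coe_set_eq _).symm

theorem subgroup_eq_of_natCard_eq {H K : Subgroup G} (h : Nat.card H = Nat.card K) : H = K :=
  SetLike.coe_injective <| by
    rw [coe_subgroup_eq_setOf_pow_natCard_eq_one, coe_subgroup_eq_setOf_pow_natCard_eq_one, h]

theorem exists_subgroup_natCard_eq {d : ℕ} (hd : d ∣ Nat.card G) :
    ∃ H : Subgroup G, Nat.card H = d := by
  obtain ⟨g, hg⟩ := exists_ofOrder_eq_natCard (α := G)
  refine ⟨zpowers (g ^ (orderOf g / d)), ?_⟩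
  rw [Nat.card_zpowers, orderOf_pow_orderOf_div (hg ▸ Nat.card_pos.ne') (hg ▸ hd)]

theorem natCard_subgroup : Nat.card (Subgroup G) = (Nat.card G).divisors.card := by
  have hdvd (H : Subgroup G) : Nat.card H ∈ (Nat.card G).divisors :=
    Nat.mem_divisors.2 ⟨H.card_subgroup_dvd_card, Nat.card_pos.ne'⟩
  rw [← Nat.card_eq_finsetCard]
  refine Nat.card_eq_of_bijective (fun H => ⟨Nat.card H, hdvd H⟩) ⟨fun H K h => ?_, ?_⟩
  · exact subgroup_eq_of_natCard_eq (congrArg Subtype.val h)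
  · rintro ⟨d, hd⟩
    obtain ⟨H, hH⟩ := exists_subgroup_natCard_eq (Nat.dvd_of_mem_divisors hd)
    exact ⟨H, Subtype.ext hH⟩

end IsCyclic

theorem Subgroup.ncard_setOf_le_of_isCyclic {G : Type*} [Group G] (K : Subgroup G) [Finite K]
    [IsCyclic K] : {H : Subgroup G | H ≤ K}.ncard = (Nat.card K).divisors.card := by
  rw [← Nat.card_coe_set_eq, ← IsCyclic.natCard_subgroup]
  exact Nat.card_congr (MapSubtype.orderIso K).toEquiv.symm

theorem ZMod.natCast_add_natCast_self (n : ℕ) : (n : ZMod (2 * n)) + n = 0 := by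
  rw [← two_mul]
  exact_mod_cast ZMod.natCast_self (2 * n)

namespace QuaternionGroup

variable {n : ℕ}

theorem xa_pow_three (i : ZMod (2 * n)) : xa i ^ 3 = xa (i + (n : ZMod (2 * n))) := by
  rw [pow_succ, xa_sq, a_mul_xa, sub_eq_add_neg,
    neg_eq_of_add_eq_zero_left (ZMod.natCast_add_natCast_self n)]

variable [NeZero n]

theorem a_mem_zpowers_a_one (i : ZMod (2 * n)) : a i ∈ zpowers (a 1 : QuaternionGroup n) := by
  rw [← ZMod.natCast_zmod_val i, ← a_one_pow]
  exact npow_mem_zpowers _ _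

theorem xa_notMem_zpowers_a_one (i : ZMod (2 * n)) :
    xa i ∉ zpowers (a 1 : QuaternionGroup n) := by
  rw [← mem_powers_iff_mem_zpowers]
  rintro ⟨k, hk : a 1 ^ k = xa i⟩
  rw [a_one_pow] at hk
  cases hk

theorem xa_mem_zpowers_xa_iff {i j : ZMod (2 * n)} :
    xa j ∈ zpowers (xa i : QuaternionGroup n) ↔ j = i ∨ j = i + (n : ZMod (2 * n)) := by
  constructor
  · rw [← mem_powers_iff_mem_zpowers]
    rintro ⟨k, hk : xa i ^ k = xa j⟩
    rw [← pow_mod_orderOf, orderOf_xa] at hk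
    have hk4 : k % 4 < 4 := Nat.mod_lt _ (by norm_num)
    interval_cases k % 4
    · cases hk
    · exact Or.inl (xa.inj (by rw [← hk, pow_one]))
    · rw [xa_sq] at hk; cases hk
    · exact Or.inr (xa.inj (by rw [← hk, xa_pow_three]))
  · rintro (rfl | rfl)
    · exact mem_zpowers _
    · rw [← xa_pow_three]
      exact npow_mem_zpowers _ _

theorem zpowers_xa_eq_zpowers_xa_iff {i j : ZMod (2 * n)} :
    zpowers (xa i : QuaternionGroup n) = zpowers (xa j) ↔
      j = i ∨ j = i + (n : ZMod (2 * n)) := by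
  refine ⟨fun h => xa_mem_zpowers_xa_iff.1 (h ▸ mem_zpowers _), fun h => ?_⟩
  have hi : i = j ∨ i = j + (n : ZMod (2 * n)) := by
    rcases h with rfl | rfl
    · exact Or.inl rfl
    · exact Or.inr (by rw [add_assoc, ZMod.natCast_add_natCast_self, add_zero])
  exact le_antisymm (zpowers_le.2 (xa_mem_zpowers_xa_iff.2 hi))
    (zpowers_le.2 (xa_mem_zpowers_xa_iff.2 h))

theorem isCyclic_subgroup_iff (H : Subgroup (QuaternionGroup n)) :
    IsCyclic H ↔ H ≤ zpowers (a 1) ∨ ∃ i, zpowers (xa i) = H := by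
  constructor
  · rw [H.isCyclic_iff_exists_zpowers_eq_top]
    rintro ⟨g | i, rfl⟩
    · exact Or.inl (zpowers_le.2 (a_mem_zpowers_a_one g))
    · exact Or.inr ⟨i, rfl⟩
  · rintro (h | ⟨i, rfl⟩)
    · exact isCyclic_of_le h
    · infer_instance

theorem exists_lt_zpowers_xa_eq (i : ZMod (2 * n)) :
    ∃ k < n, zpowers (xa (k : ZMod (2 * n))) = zpowers (xa i : QuaternionGroup n) := by
  rcases lt_or_ge i.val n with h | h
  · exact ⟨i.val, h, by rw [ZMod.natCast_zmod_val]⟩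
  · refine ⟨i.val - n, by have := i.val_lt; omega, zpowers_xa_eq_zpowers_xa_iff.2 (Or.inr ?_)⟩
    rw [← Nat.cast_add, Nat.sub_add_cancel h, ZMod.natCast_zmod_val]

theorem ncard_range_zpowers_xa :
    (Set.range fun i => zpowers (xa i : QuaternionGroup n)).ncard = n := by
  have hrange : (Set.range fun i => zpowers (xa i : QuaternionGroup n)) =
      Set.range fun k : Fin n => zpowers (xa ((k : ℕ) : ZMod (2 * n))) := by
    ext H
    constructor
    · rintro ⟨i, rfl⟩
      obtain ⟨k, hk, hki⟩ := exists_lt_zpowers_xa_eq i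
      exact ⟨⟨k, hk⟩, hki⟩
    · rintro ⟨k, rfl⟩
      exact ⟨_, rfl⟩
  have hinj : Function.Injective fun k : Fin n => zpowers (xa ((k : ℕ) : ZMod (2 * n))) := by
    intro k l hkl
    have hval (m : ℕ) (hm : m < 2 * n) : (m : ZMod (2 * n)).val = m := ZMod.val_cast_of_lt hm
    have hk := k.isLt
    have hl := l.isLt
    rcases zpowers_xa_eq_zpowers_xa_iff.1 hkl with h | h
    · replace h := congrArg ZMod.val h
      rw [hval _ (by omega), hval _ (by omega)] at h
      exact Fin.ext h.symm
    · replace h := congrArg ZMod.val h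
      rw [← Nat.cast_add, hval _ (by omega), hval _ (by omega)] at h
      omega
  rw [hrange, ← Nat.card_coe_set_eq, Nat.card_range_of_injective hinj, Nat.card_eq_fintype_card,
    Fintype.card_fin]

end QuaternionGroup

/-- The number of cyclic subgroups of the dicyclic group `Dic_{4n}` equals `τ(2n) + n`. -/
theorem card_cyclic_subgroup_quaternionGroup (n : ℕ) (hn : 0 < n) :
    Nat.card {H : Subgroup (QuaternionGroup n) // IsCyclic H} = tau (2 * n) + n := by
  have : NeZero n := ⟨hn.ne'⟩
  have hcyclic : {H : Subgroup (QuaternionGroup n) | IsCyclic H} =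
      {H | H ≤ zpowers (a 1)} ∪ Set.range fun i => zpowers (xa i) := by
    ext H
    exact isCyclic_subgroup_iff H
  have hdisjoint : Disjoint {H : Subgroup (QuaternionGroup n) | H ≤ zpowers (a 1)}
      (Set.range fun i => zpowers (xa i)) := by
    refine Set.disjoint_left.2 ?_
    rintro H hH ⟨i, rfl⟩
    exact xa_notMem_zpowers_a_one i (hH (mem_zpowers _))
  rw [← Set.coe_ofPred, Nat.card_coe_set_eq, hcyclic,
    Set.ncard_union_eq hdisjoint (Set.toFinite _) (Set.toFinite _),
    ncard_setOf_le_of_isCyclic, Nat.card_zpowers, orderOf_a_one, ncard_range_zpowers_xa, tau]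
end

section
/- For every positive integer m, the number of cyclic subgroups of the direct product ℤ₂ × ℤ_{2^m} equals 2m + 2. -/
/-!
Every element of `ℤ₂ × ℤ_{2^m}` is an odd power `(x, 2^j)^u` with `j ≤ m`, and in a group of
order `2^(m+1)` an odd power generates the same cyclic subgroup. Hence the cyclic subgroups are the
`⟨(x, 2^j)⟩` with `x ∈ ℤ₂`, `0 ≤ j ≤ m`, and these `2(m+1)` subgroups are distinct: the projection
of `⟨(x, 2^j)⟩` to `ℤ_{2^m}` has order `2^(m-j)`, and `x = 0` exactly when it lies in `0 × ℤ_{2^m}`.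
-/

open Subgroup Multiplicative

theorem Subgroup.zpowers_pow_eq_of_coprime_natCard {G : Type*} [Group G] (g : G) {k : ℕ}
    (h : k.Coprime (Nat.card G)) : zpowers (g ^ k) = zpowers g :=
  le_antisymm (zpowers_le.2 (pow_mem (mem_zpowers g) k))
    (zpowers_le.2 (mem_zpowers_pow_iff.2 (h.coprime_dvd_right (_root_.orderOf_dvd_natCard g))))

theorem ZMod.exists_eq_mul_pow_of_not_dvd {p : ℕ} (hp : 1 < p) (m : ℕ) (y : ZMod (p ^ m)) :
    ∃ u j : ℕ, ¬p ∣ u ∧ j ≤ m ∧ y = u * (p : ZMod (p ^ m)) ^ j := by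
  have : NeZero (p ^ m) := ⟨by positivity⟩
  by_cases hy : y = 0
  · refine ⟨1, m, fun h => hp.ne' (Nat.dvd_one.1 h), le_rfl, ?_⟩
    rw [hy, Nat.cast_one, one_mul, ← Nat.cast_pow, ZMod.natCast_self]
  · have hval0 : y.val ≠ 0 := (ZMod.val_ne_zero y).2 hy
    obtain ⟨j, u, hu, hval⟩ := Nat.exists_eq_pow_mul_and_not_dvd hval0 p hp.ne'
    have hj : p ^ j < p ^ m :=
      (Nat.le_of_dvd (Nat.pos_of_ne_zero hval0) (hval ▸ dvd_mul_right _ _)).trans_lt (ZMod.val_lt y)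
    refine ⟨u, j, hu, ((Nat.pow_lt_pow_iff_right hp).1 hj).le, ?_⟩
    rw [← ZMod.natCast_zmod_val y, hval]
    push_cast
    ring

theorem ZMod.addOrderOf_pow {p : ℕ} (hp : 0 < p) {j m : ℕ} (hj : j ≤ m) :
    addOrderOf ((p : ZMod (p ^ m)) ^ j) = p ^ (m - j) := by
  rw [← Nat.cast_pow, ZMod.addOrderOf_coe _ (by positivity), Nat.gcd_eq_right (pow_dvd_pow p hj),
    Nat.pow_div hj hp]

namespace CyclicSubgroupsZ2Z2m

abbrev G (m : ℕ) := Multiplicative (ZMod 2) × Multiplicative (ZMod (2 ^ m))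

def gen (m : ℕ) (p : ZMod 2 × Fin (m + 1)) : G m := (ofAdd p.1, ofAdd (2 ^ (p.2 : ℕ)))

theorem zpowers_gen_le_ker_fst_iff {m : ℕ} (p : ZMod 2 × Fin (m + 1)) :
    zpowers (gen m p) ≤ (MonoidHom.fst _ _).ker ↔ p.1 = 0 := by
  rw [zpowers_le, MonoidHom.mem_ker]
  rfl

theorem natCard_map_snd_zpowers_gen {m : ℕ} (p : ZMod 2 × Fin (m + 1)) :
    Nat.card ((zpowers (gen m p)).map (MonoidHom.snd _ _)) = 2 ^ (m - p.2) := by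
  rw [MonoidHom.map_zpowers, Nat.card_zpowers, MonoidHom.coe_snd, gen, orderOf_ofAdd_eq_addOrderOf]
  exact_mod_cast ZMod.addOrderOf_pow two_pos (Nat.lt_succ_iff.1 p.2.2)

theorem natCard_G (m : ℕ) : Nat.card (G m) = 2 ^ (m + 1) := by
  simp [pow_succ, mul_comm]

theorem zpowers_gen_injective (m : ℕ) : Function.Injective (fun p => zpowers (gen m p)) := by
  rintro ⟨x, j⟩ ⟨x', j'⟩ (h : zpowers (gen m (x, j)) = zpowers (gen m (x', j')))
  have hx : x = 0 ↔ x' = 0 := by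
    rw [← zpowers_gen_le_ker_fst_iff (x, j), h, zpowers_gen_le_ker_fst_iff]
  have hj := natCard_map_snd_zpowers_gen (x, j)
  rw [h, natCard_map_snd_zpowers_gen] at hj
  have hj' : m - (j' : ℕ) = m - j := Nat.pow_right_injective le_rfl hj
  have eq_of_eq_zero_iff : ∀ a b : ZMod 2, (a = 0 ↔ b = 0) → a = b := by decide
  have hjj' : (j : ℕ) = j' := by have := j.isLt; have := j'.isLt; omega
  rw [eq_of_eq_zero_iff x x' hx, Fin.ext hjj']

theorem exists_zpowers_gen_eq {m : ℕ} (g : G m) : ∃ p, zpowers (gen m p) = zpowers g := by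
  obtain ⟨u, j, hu, hj, hy⟩ := ZMod.exists_eq_mul_pow_of_not_dvd one_lt_two m (toAdd g.2)
  have hodd : Odd u := Nat.odd_iff.2 (Nat.two_dvd_ne_zero.1 hu)
  refine ⟨(toAdd g.1, ⟨j, Nat.lt_succ_of_le hj⟩), ?_⟩
  have hpow : gen m (toAdd g.1, ⟨j, Nat.lt_succ_of_le hj⟩) ^ u = g := by
    refine Prod.ext ?_ ?_
    · show ofAdd (toAdd g.1) ^ u = g.1
      rw [← ofAdd_nsmul, nsmul_eq_mul, ZMod.natCast_eq_one_iff_odd.2 hodd, one_mul, ofAdd_toAdd]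
    · show ofAdd ((2 : ZMod (2 ^ m)) ^ j) ^ u = g.2
      rw [← ofAdd_nsmul, nsmul_eq_mul, ← ofAdd_toAdd g.2, hy, Nat.cast_ofNat]
  have hcop : u.Coprime (Nat.card (G m)) := by
    rw [natCard_G]
    exact Nat.Coprime.pow_right _ (Nat.coprime_two_right.2 hodd)
  rw [← zpowers_pow_eq_of_coprime_natCard _ hcop, hpow]

theorem isCyclic_iff_mem_range_zpowers_gen {m : ℕ} (H : Subgroup (G m)) :
    IsCyclic H ↔ H ∈ Set.range (fun p => zpowers (gen m p)) := by
  rw [Subgroup.isCyclic_iff_exists_zpowers_eq_top]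
  constructor
  · rintro ⟨g, rfl⟩
    exact exists_zpowers_gen_eq g
  · rintro ⟨p, rfl⟩
    exact ⟨_, rfl⟩

end CyclicSubgroupsZ2Z2m

open CyclicSubgroupsZ2Z2m in
theorem card_cyclic_subgroup_Z2_prod_Z2m_general (m : ℕ) :
    Nat.card {H : Subgroup (Multiplicative (ZMod 2) × Multiplicative (ZMod (2 ^ m))) //
        IsCyclic H}
      = 2 * m + 2 := by
  rw [Nat.card_congr (Equiv.subtypeEquivRight isCyclic_iff_mem_range_zpowers_gen),
    Nat.card_range_of_injective (zpowers_gen_injective m), Nat.card_prod, Nat.card_zmod,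
    Nat.card_eq_fintype_card, Fintype.card_fin]
  ring

/-- For every positive integer `m`, the number of cyclic subgroups of `ℤ₂ × ℤ_{2^m}` equals
`2m + 2`. -/
theorem card_cyclic_subgroup_Z2_prod_Z2m (m : ℕ) (hm : 0 < m) :
    Nat.card {H : Subgroup (Multiplicative (ZMod 2) × Multiplicative (ZMod (2 ^ m))) //
        IsCyclic H}
      = 2 * m + 2 :=
  card_cyclic_subgroup_Z2_prod_Z2m_general m
end

section
/- Let m ≥ 2. The number of cyclic subgroups of the direct product ℤ₂ × Q_{2^{m+1}} equals 2^m + 2m + 2. -/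
/-- `ℤ₂ × Q_{2^{m+1}}`, the direct product of the cyclic group of order 2 and the generalized
quaternion group of order `2^{m+1}`. -/
abbrev Z2ProdQuaternion (m : ℕ) : Type :=
  Multiplicative (ZMod 2) × QuaternionGroup (2 ^ (m - 1))

/-!
A cyclic subgroup `H` has exactly `φ |H|` generators, so the number of cyclic subgroups of a
finite group is `∑ g, 1 / φ (ord g)`. Since `φ (lcm 2 n) = φ n` for every `n`, an element of order
dividing 2 in a first factor does not change these weights, and `ℤ₂ × Q` has exactly twice as
many cyclic subgroups as `Q`. In `Q_{2^{m+1}}` the elements `a i` form a cyclic group of order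
`2^m`, contributing one subgroup per divisor, i.e. `m + 1`, while the `2^m` elements `xa i` all
have order 4 and contribute `2^m / φ 4 = 2^(m-1)`.
-/

open Finset Subgroup

section CyclicSubgroups

variable {G : Type*} [Group G]

theorem Subgroup.zpowers_coe_eq_iff_orderOf_eq_natCard {H : Subgroup G} [Finite H] (h : H) :
    zpowers (h : G) = H ↔ orderOf h = Nat.card H := by
  rw [← orderOf_coe, ← Nat.card_zpowers]
  exact ⟨fun hH => by rw [hH], fun hcard => eq_of_le_of_card_ge (zpowers_le.2 h.2) hcard.ge⟩

theorem Subgroup.natCard_generators_eq_totient (H : Subgroup G) [Finite H] [IsCyclic H] :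
    Nat.card {g : G // zpowers g = H} = (Nat.card H).totient := by
  have e : {g : G // zpowers g = H} ≃ {h : H // orderOf h = Nat.card H} :=
    { toFun := fun g => ⟨⟨g, zpowers_le.1 g.2.le⟩,
        (zpowers_coe_eq_iff_orderOf_eq_natCard _).1 g.2⟩
      invFun := fun h => ⟨h.1, (zpowers_coe_eq_iff_orderOf_eq_natCard _).2 h.2⟩
      left_inv := fun _ => rfl
      right_inv := fun _ => rfl }
  classical
  have := Fintype.ofFinite H
  rw [Nat.card_congr e, Nat.card_eq_fintype_card, Fintype.card_subtype, Nat.card_eq_fintype_card]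
  exact IsCyclic.card_orderOf_eq_totient dvd_rfl

theorem natCard_isCyclic_subgroup_eq_sum_inv_totient [Fintype G] :
    (Nat.card {H : Subgroup G // IsCyclic H} : ℚ) = ∑ g : G, ((orderOf g).totient : ℚ)⁻¹ := by
  classical
  let C := {H : Subgroup G // IsCyclic H}
  have := Fintype.ofFinite C
  let gen : G → C := fun g => ⟨zpowers g, inferInstance⟩
  have hfiber (H : C) : Fintype.card {g // gen g = H} = (Nat.card H.1).totient := by
    have := H.2
    rw [← Nat.card_eq_fintype_card, ← H.1.natCard_generators_eq_totient]
    simp [gen, C, Subtype.ext_iff]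
  calc (Nat.card C : ℚ)
      = ∑ H : C, ∑ _g : {g // gen g = H}, ((Nat.card H.1).totient : ℚ)⁻¹ := by
        simp [hfiber]
    _ = ∑ g, ((Nat.card (zpowers g)).totient : ℚ)⁻¹ := Fintype.sum_fiberwise' gen _
    _ = _ := by simp only [Nat.card_zpowers]

end CyclicSubgroups

theorem Nat.totient_lcm_of_dvd_two {d : ℕ} (hd : d ∣ 2) (n : ℕ) :
    (d.lcm n).totient = n.totient := by
  rcases (Nat.dvd_prime Nat.prime_two).1 hd with rfl | rfl
  · rw [Nat.lcm_one_left]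
  · by_cases h : 2 ∣ n
    · rw [Nat.lcm_eq_right h]
    · rw [(Nat.coprime_two_left.2 (Nat.odd_iff.2 (Nat.two_dvd_ne_zero.1 h))).lcm_eq_mul,
        Nat.totient_mul_of_prime_of_not_dvd Nat.prime_two h, Nat.add_one_sub_one, one_mul]

theorem natCard_isCyclic_subgroup_prod_of_sq_eq_one {A Q : Type*} [Group A] [Group Q]
    [Fintype A] [Fintype Q] (hA : ∀ a : A, a ^ 2 = 1) :
    Nat.card {H : Subgroup (A × Q) // IsCyclic H}
      = Nat.card A * Nat.card {H : Subgroup Q // IsCyclic H} := by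
  have htotient (g : A × Q) : (orderOf g).totient = (orderOf g.2).totient := by
    rw [Prod.orderOf, Nat.totient_lcm_of_dvd_two (orderOf_dvd_of_pow_eq_one (hA g.1))]
  have := natCard_isCyclic_subgroup_eq_sum_inv_totient (G := A × Q)
  rw [Fintype.sum_prod_type] at this
  simp only [htotient, sum_const, card_univ, nsmul_eq_mul,
    ← natCard_isCyclic_subgroup_eq_sum_inv_totient, Nat.card_eq_fintype_card] at this ⊢
  exact_mod_cast this

theorem ZMod.sum_inv_totient_addOrderOf (N : ℕ) [NeZero N] :
    ∑ i : ZMod N, ((addOrderOf i).totient : ℚ)⁻¹ = #N.divisors := by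
  have hdvd (i : ZMod N) : addOrderOf i ∈ N.divisors :=
    Nat.mem_divisors.2 ⟨by simpa only [ZMod.card] using addOrderOf_dvd_card (x := i), NeZero.ne N⟩
  rw [← sum_fiberwise_of_maps_to (fun i _ => hdvd i), card_eq_sum_ones, Nat.cast_sum]
  refine sum_congr rfl fun d hd => ?_
  have hφ : (d.totient : ℚ) ≠ 0 := by
    exact_mod_cast (Nat.totient_pos.2 (Nat.pos_of_mem_divisors hd)).ne'
  rw [sum_congr rfl fun i hi => by rw [(mem_filter.1 hi).2], sum_const,
    IsAddCyclic.card_addOrderOf_eq_totient (by rw [ZMod.card]; exact Nat.dvd_of_mem_divisors hd),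
    nsmul_eq_mul, mul_inv_cancel₀ hφ, Nat.cast_one]

namespace QuaternionGroup

variable {n : ℕ} [NeZero n]

theorem orderOf_a_eq_addOrderOf (i : ZMod (2 * n)) : orderOf (a i) = addOrderOf i := by
  rw [orderOf_a, ← ZMod.addOrderOf_coe _ (NeZero.ne _), ZMod.natCast_zmod_val]

theorem natCard_isCyclic_subgroup :
    Nat.card {H : Subgroup (QuaternionGroup n) // IsCyclic H} = #(2 * n).divisors + n := by
  let e : ZMod (2 * n) ⊕ ZMod (2 * n) ≃ QuaternionGroup n :=
    { toFun := Sum.elim a xa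
      invFun := fun | a i => .inl i | xa i => .inr i
      left_inv := by rintro (i | i) <;> rfl
      right_inv := by rintro (i | i) <;> rfl }
  have hφ : (4 : ℕ).totient = 2 := by decide
  have := natCard_isCyclic_subgroup_eq_sum_inv_totient (G := QuaternionGroup n)
  rw [← e.sum_comp, Fintype.sum_sum_type] at this
  simp only [e, Equiv.coe_fn_mk, Sum.elim_inl, Sum.elim_inr, orderOf_a_eq_addOrderOf, orderOf_xa,
    ZMod.sum_inv_totient_addOrderOf, hφ, sum_const, card_univ, ZMod.card, nsmul_eq_mul] at this
  have hcount : (Nat.card {H : Subgroup (QuaternionGroup n) // IsCyclic H} : ℚ)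
      = #(2 * n).divisors + n := by
    rw [this]; push_cast; ring
  exact_mod_cast hcount

end QuaternionGroup

/-- For `m ≥ 2`, the number of cyclic subgroups of `ℤ₂ × Q_{2^{m+1}}` equals `2^m + 2m + 2`. -/
theorem card_cyclic_subgroup_Z2_prod_quaternion (m : ℕ) (hm : 2 ≤ m) :
    Nat.card {H : Subgroup (Z2ProdQuaternion m) // IsCyclic H} = 2 ^ m + 2 * m + 2 := by
  have hsq : ∀ u : Multiplicative (ZMod 2), u ^ 2 = 1 := by decide
  have hpow : 2 * 2 ^ (m - 1) = 2 ^ m := by rw [← pow_succ', Nat.sub_add_cancel (by omega)]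
  rw [natCard_isCyclic_subgroup_prod_of_sq_eq_one hsq, QuaternionGroup.natCard_isCyclic_subgroup,
    hpow, Nat.divisors_prime_pow Nat.prime_two, card_map, card_range, Nat.card_eq_fintype_card,
    Fintype.card_multiplicative, ZMod.card, ← hpow]
  ring
end
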